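/- arXiv:1502.00941 — 10 statements merged into one kernel-verified Lean document; each statement's English description precedes it below -/
import Mathlib

section
/- Let n ≥ 1 and let w_1,…,w_n be nonzero complex numbers such that ∏_{j∈S} w_j ≠ 1 for every nonempty subset S ⊆ {1,…,n}. Then ∑_{σ∈S_n} sgn(σ) ∏_{j=1}^n ((1−w_{σ(j)})/w_{σ(j)})^j · [(1−w_{σ(1)})(1−w_{σ(1)}w_{σ(2)})⋯(1−w_{σ(1)}⋯w_{σ(n)})]^{−1} = (−1)^{n(n−1)/2} (∏_{j=1}^n w_j^{−n}) · det(w_j^{i−1})_{1≤i,j≤n}. -/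
/-!
Sort the permutations by their last value `p = σ n`. The last prefix product is the full
product `w₀ ⋯ wₙ`, so the sum `S(w)` for `n + 1` variables splits as
`S(w) = ∑ₚ ± ((1 - w_p) / w_p) ^ (n + 1) (1 - w₀ ⋯ wₙ)⁻¹ S(w without w_p)`.
By induction the inner sums are Vandermonde determinants, and the resulting alternating sum is
the Laplace expansion along row `0` of the Vandermonde matrix whose row `0` is replaced by
`(1 - w_j) ^ (n + 1)`. Expanding that row binomially, only the constant term (giving `det V`) and
the top term `(-w_j) ^ (n + 1)` (giving `-(w₀ ⋯ wₙ) det V` after a cyclic shift of the rows)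
survive, so the determinant is `(1 - w₀ ⋯ wₙ) det V`.
-/

open Finset Equiv

section Perm

variable {n : ℕ}

def permSnoc (p : Fin (n + 1)) (e : Perm (Fin n)) : Perm (Fin (n + 1)) :=
  p.cycleRange.symm * Perm.decomposeFin.symm (0, e) * finRotate (n + 1)

@[simp] lemma permSnoc_last (p : Fin (n + 1)) (e : Perm (Fin n)) :
    permSnoc p e (Fin.last n) = p := by
  simp [permSnoc]

@[simp] lemma permSnoc_castSucc (p : Fin (n + 1)) (e : Perm (Fin n)) (i : Fin n) :
    permSnoc p e i.castSucc = p.succAbove (e i) := by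
  simp [permSnoc]

lemma sign_permSnoc (p : Fin (n + 1)) (e : Perm (Fin n)) :
    Perm.sign (permSnoc p e) = (-1) ^ ((p : ℕ) + n) * Perm.sign e := by
  simp [permSnoc, Perm.decomposeFin.symm_sign, Fin.sign_cycleRange, sign_finRotate, pow_add,
    mul_right_comm]

lemma permSnoc_bijective :
    Function.Bijective fun pe : Fin (n + 1) × Perm (Fin n) => permSnoc pe.1 pe.2 := by
  refine (Fintype.bijective_iff_injective_and_card _).2
    ⟨?_, by simp [Fintype.card_perm, Nat.factorial_succ]⟩
  rintro ⟨p, e⟩ ⟨q, f⟩ h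
  have h' (i : Fin (n + 1)) : permSnoc p e i = permSnoc q f i := DFunLike.congr_fun h i
  obtain rfl : p = q := by simpa using h' (Fin.last n)
  simpa [Equiv.ext_iff] using fun i : Fin n => h' i.castSucc

lemma sum_perm_fin_succ_eq_sum_permSnoc {M : Type*} [AddCommMonoid M]
    (f : Perm (Fin (n + 1)) → M) :
    ∑ σ, f σ = ∑ p, ∑ e, f (permSnoc p e) := by
  rw [← Fintype.sum_prod_type']
  exact (Fintype.sum_bijective _ permSnoc_bijective _ _ fun _ => rfl).symm

end Perm

section Vandermonde

open Matrix

variable {R : Type*} [CommRing R] {n : ℕ}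

lemma det_mul_row_vandermonde_transpose (w : Fin n → R) :
    (of fun i j : Fin n => w j ^ ((i : ℕ) + 1)).det = (∏ j, w j) * (vandermonde w).det := by
  rw [← det_transpose (vandermonde w), ← det_mul_row]
  congr with i j
  simp [pow_succ']

lemma det_updateRow_zero_pow_vandermonde_transpose (w : Fin (n + 1) → R) :
    ((vandermonde w)ᵀ.updateRow 0 fun j => w j ^ (n + 1)).det
      = (-1) ^ n * (∏ j, w j) * (vandermonde w).det := by
  set U := (vandermonde w)ᵀ.updateRow 0 fun j => w j ^ (n + 1)
  have hrot : U.submatrix (finRotate (n + 1)) id =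
      of fun i j : Fin (n + 1) => w j ^ ((i : ℕ) + 1) := by
    ext i j
    cases i using Fin.lastCases with
    | last => simp [U]
    | cast i => simp [U, Fin.succ_ne_zero]
  have h := det_permute (finRotate (n + 1)) U
  rw [hrot, det_mul_row_vandermonde_transpose, sign_finRotate, Nat.add_sub_cancel] at h
  push_cast at h
  calc U.det = ((-1) ^ n * (-1) ^ n) * U.det := by rw [← mul_pow]; simp
    _ = (-1) ^ n * ((∏ j, w j) * (vandermonde w).det) := by rw [h, mul_assoc]
    _ = _ := by ring

lemma det_updateRow_zero_one_sub_pow_vandermonde_transpose (w : Fin (n + 1) → R) :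
    ((vandermonde w)ᵀ.updateRow 0 fun j => (1 - w j) ^ (n + 1)).det
      = (1 - ∏ j, w j) * (vandermonde w).det := by
  -- The terms of degree `1, …, n` of `(1 - x) ^ (n + 1)` are rows of the matrix and do not
  -- change the determinant.
  have hrow : (fun j => (1 - w j) ^ (n + 1))
      = (∑ k : Fin (n + 1), ((-1) ^ (k : ℕ) * ((n + 1).choose k : R)) • (vandermonde w)ᵀ k)
        + (-1 : R) ^ (n + 1) • fun j => w j ^ (n + 1) := by
    funext j
    rw [sub_eq_neg_add, add_pow, Finset.sum_range_succ, ← Fin.sum_univ_eq_sum_range]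
    simp only [Pi.add_apply, Finset.sum_apply, Pi.smul_apply, transpose_apply, vandermonde_apply,
      smul_eq_mul, one_pow, mul_one, neg_pow (w j), Nat.choose_self, Nat.cast_one]
    congr 1
    exact Finset.sum_congr rfl fun k _ => by ring
  rw [hrow, det_updateRow_add, det_updateRow_sum, det_updateRow_smul,
    det_updateRow_zero_pow_vandermonde_transpose, det_transpose]
  have hsign : (-1 : R) ^ (n + 1) * (-1) ^ n = -1 := by
    rw [← pow_add]; exact Odd.neg_one_pow ⟨n, by ring⟩
  simp only [Fin.val_zero, pow_zero, Nat.choose_zero_right, Nat.cast_one, one_mul, smul_eq_mul]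
  linear_combination (∏ j, w j) * (vandermonde w).det * hsign

lemma sum_alternating_one_sub_pow_mul_det_vandermonde (w : Fin (n + 1) → R) :
    ∑ p : Fin (n + 1), (-1) ^ (p : ℕ) * (1 - w p) ^ (n + 1) *
        ((∏ i, w (p.succAbove i)) * (vandermonde (w ∘ p.succAbove)).det)
      = (1 - ∏ j, w j) * (vandermonde w).det := by
  rw [← det_updateRow_zero_one_sub_pow_vandermonde_transpose, det_succ_row_zero]
  refine Finset.sum_congr rfl fun p _ => ?_
  have hminor : ((vandermonde w)ᵀ.updateRow 0 fun j => (1 - w j) ^ (n + 1)).submatrix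
      Fin.succ p.succAbove = of fun i j : Fin n => (w ∘ p.succAbove) j ^ ((i : ℕ) + 1) := by
    ext i j
    simp [Fin.succ_ne_zero]
  rw [hminor, det_mul_row_vandermonde_transpose]
  simp

end Vandermonde

section Symmetrization

open Matrix

variable {K : Type*} [Field K] {n : ℕ}

def symmetrizationSum (w : Fin n → K) : K :=
  ∑ σ : Perm (Fin n), ((Perm.sign σ : ℤ) : K) *
    (∏ j : Fin n, ((1 - w (σ j)) / w (σ j)) ^ ((j : ℕ) + 1)) *
    (∏ k : Fin n, (1 - ∏ j ∈ Iic k, w (σ j)))⁻¹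

lemma symmetrizationSum_succ (w : Fin (n + 1) → K) :
    symmetrizationSum w = ∑ p : Fin (n + 1),
      (-1) ^ ((p : ℕ) + n) * ((1 - w p) / w p) ^ (n + 1) * (1 - ∏ j, w j)⁻¹ *
        symmetrizationSum (w ∘ p.succAbove) := by
  rw [symmetrizationSum, sum_perm_fin_succ_eq_sum_permSnoc]
  refine Finset.sum_congr rfl fun p _ => ?_
  rw [symmetrizationSum, Finset.mul_sum]
  refine Finset.sum_congr rfl fun e _ => ?_
  have hprefix : ∏ k : Fin (n + 1), (1 - ∏ j ∈ Iic k, w (permSnoc p e j))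
      = (∏ k : Fin n, (1 - ∏ j ∈ Iic k, w (p.succAbove (e j)))) * (1 - ∏ j, w j) := by
    have hfull : Iic (Fin.last n) = univ := by rw [← Fin.top_eq_last, Finset.Iic_top]
    simp only [Fin.prod_univ_castSucc, Fin.prod_Iic_castSucc, permSnoc_castSucc, hfull,
      Equiv.prod_comp (permSnoc p e) w]
  rw [sign_permSnoc, Fin.prod_univ_castSucc, hprefix]
  simp only [permSnoc_castSucc, permSnoc_last, Fin.val_last, Fin.val_castSucc,
    Function.comp_apply, mul_inv]
  push_cast
  ring

theorem symmetrizationSum_eq (w : Fin n → K) (hw0 : ∀ j, w j ≠ 0)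
    (hS : ∀ S : Finset (Fin n), S.Nonempty → ∏ j ∈ S, w j ≠ 1) :
    symmetrizationSum w =
      (-1) ^ (n * (n - 1) / 2) * (∏ j, w j ^ n)⁻¹ * (vandermonde w).det := by
  induction n with
  | zero => simp [symmetrizationSum]
  | succ n ih =>
    have hW : (1 : K) - ∏ j, w j ≠ 0 := sub_ne_zero.2 (hS univ univ_nonempty).symm
    have hdet : (vandermonde w).det = (1 - ∏ j, w j)⁻¹ * ∑ p : Fin (n + 1),
        (-1) ^ (p : ℕ) * (1 - w p) ^ (n + 1) *
          ((∏ i, w (p.succAbove i)) * (vandermonde (w ∘ p.succAbove)).det) :=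
      (eq_inv_mul_iff_mul_eq₀ hW).2 (sum_alternating_one_sub_pow_mul_det_vandermonde w).symm
    rw [symmetrizationSum_succ, hdet, Finset.mul_sum, Finset.mul_sum]
    refine Finset.sum_congr rfl fun p _ => ?_
    rw [ih (w ∘ p.succAbove) (fun i => hw0 _) fun S hS' => by
      simpa [Finset.prod_map] using hS (S.map p.succAboveEmb) hS'.map]
    have hP : ∏ i, w (p.succAbove i) ≠ 0 := prod_ne_zero_iff.2 fun i _ => hw0 _
    simp only [Function.comp_apply]
    rw [Nat.triangle_succ, Fin.prod_univ_succAbove (fun j => w j ^ (n + 1)) p, prod_pow, prod_pow,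
      pow_add, pow_add, div_pow]
    field_simp [hw0 p, hP]
    ring

end Symmetrization

theorem symmetrization_identity_one_general (n : ℕ) (w : Fin n → ℂ)
    (hw0 : ∀ j, w j ≠ 0)
    (hS : ∀ S : Finset (Fin n), S.Nonempty → (∏ j ∈ S, w j) ≠ 1) :
    (∑ σ : Perm (Fin n),
        ((Perm.sign σ : ℤ) : ℂ) *
          (∏ j : Fin n, ((1 - w (σ j)) / w (σ j)) ^ ((j : ℕ) + 1)) *
          (∏ k : Fin n, (1 - ∏ j ∈ Finset.Iic k, w (σ j)))⁻¹) =
      (-1 : ℂ) ^ (n * (n - 1) / 2) * (∏ j : Fin n, w j ^ (-(n : ℤ))) *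
        Matrix.det (Matrix.of fun i j : Fin n => w j ^ (i : ℕ)) := by
  have hzpow : ∏ j : Fin n, w j ^ (-(n : ℤ)) = (∏ j, w j ^ n)⁻¹ := by
    simp only [zpow_neg, zpow_natCast, prod_inv_distrib]
  have hvandermonde : (Matrix.of fun i j : Fin n => w j ^ (i : ℕ)) =
      (Matrix.vandermonde w).transpose := rfl
  rw [hzpow, hvandermonde, Matrix.det_transpose]
  exact symmetrizationSum_eq w hw0 hS

/-- The Tracy–Widom type symmetrization identity (2.9): for nonzero `w_1,…,w_n` such that
no nonempty subproduct equals `1`,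
`∑_{σ∈S_n} sgn(σ) ∏_j ((1-w_{σ(j)})/w_{σ(j)})^j ·
  [(1-w_{σ(1)})(1-w_{σ(1)}w_{σ(2)})⋯(1-w_{σ(1)}⋯w_{σ(n)})]⁻¹
  = (-1)^{n(n-1)/2} (∏_j w_j^{-n}) · det(w_j^{i-1})`. -/
theorem symmetrization_identity_one (n : ℕ) (hn : 1 ≤ n) (w : Fin n → ℂ)
    (hw0 : ∀ j, w j ≠ 0)
    (hS : ∀ S : Finset (Fin n), S.Nonempty → (∏ j ∈ S, w j) ≠ 1) :
    (∑ σ : Perm (Fin n),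
        ((Perm.sign σ : ℤ) : ℂ) *
          (∏ j : Fin n, ((1 - w (σ j)) / w (σ j)) ^ ((j : ℕ) + 1)) *
          (∏ k : Fin n, (1 - ∏ j ∈ Finset.Iic k, w (σ j)))⁻¹) =
      (-1 : ℂ) ^ (n * (n - 1) / 2) * (∏ j : Fin n, w j ^ (-(n : ℤ))) *
        Matrix.det (Matrix.of fun i j : Fin n => w j ^ (i : ℕ)) :=
  symmetrization_identity_one_general n w hw0 hS
end

section
/- Let n ≥ 1 and let z_1,…,z_n, w_1,…,w_n be complex numbers with z_j ≠ 0, w_j ≠ 0, w_j ≠ 1 for all j, w_i ≠ z_j for all i,j, and such that ∏_{j∈S} z_j ≠ ∏_{j∈T} w_j for all subsets S,T ⊆ {1,…,n} of equal nonzero cardinality. Then ∑_{σ_1,σ_2∈S_n} sgn(σ_1)sgn(σ_2) ∏_{j=1}^n ( w_{σ_2(j)}(1−z_{σ_1(j)}) / ( z_{σ_1(j)}(1−w_{σ_2(j)}) ) )^j · ∏_{k=1}^n ( 1 − (z_{σ_1(1)}⋯z_{σ_1(k)})/(w_{σ_2(1)}⋯w_{σ_2(k)}) )^{−1} = ( ∏_{j=1}^n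 w_j^{n+1}(1−z_j)^n / ( z_j^n (1−w_j)^n ) ) · det( 1/(w_j−z_i) )_{1≤i,j≤n}. -/
/-!
Write `r(a, b) = b(1-a)/(a(1-b))`, `Z = ∏ z_j`, `W = ∏ w_j`. After reversing the order of the
factors, expanding both permutations along their first entry shows that the left side `F_n(z, w)`
satisfies
`F_{n+1}(z, w) = ∑_{p,q} (-1)^{p+q} r(z_p, w_q)^{n+1} (1 - Z/W)⁻¹ F_n(z without z_p, w without w_q)`.
The right side satisfies the same recursion: the sum over `p, q` of its minors is `bᵀ adj(C) a`
for the Cauchy matrix `C`, `a_i = (1-z_i)/z_i` and `b_j = 1/(1-w_j)`, and `C v = a` is solved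
explicitly by the partial fraction decomposition of
`((x-1) ∏ (x-w_j) - (x-W/Z) ∏ (x-z_j)) / (x ∏ (x-w_j))`, whose numerator has degree `≤ n` and
vanishes at `0`. When `w` is not injective both sides vanish by antisymmetry.
-/

open Finset Equiv Polynomial
open scoped Matrix

namespace Equiv.Perm

variable {ι α R : Type*} [Fintype ι] [DecidableEq ι] [CommRing R]

theorem sum_sign_mul_comp_mul (g : (ι → α) → R) (x : ι → α) (π : Perm ι) :
    ∑ σ : Perm ι, ((sign σ : ℤ) : R) * g (x ∘ σ ∘ π) =
      ((sign π : ℤ) : R) * ∑ σ : Perm ι, ((sign σ : ℤ) : R) * g (x ∘ σ) := by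
  rw [← Equiv.sum_comp (Equiv.mulRight π) (fun σ => ((sign σ : ℤ) : R) * g (x ∘ σ)), mul_sum]
  refine sum_congr rfl fun σ _ => ?_
  have hπ : ((sign π : ℤ) : R) * ((sign π : ℤ) : R) = 1 := by
    rw [← Int.cast_mul, ← Units.val_mul, Int.units_mul_self, Units.val_one, Int.cast_one]
  simp only [coe_mulRight, sign_mul, Units.val_mul, Int.cast_mul, coe_mul]
  linear_combination -(((sign σ : ℤ) : R) * g (x ∘ σ ∘ π)) * hπ

theorem sum_sign_mul_comp_eq_zero (g : (ι → α) → R) {x : ι → α} (hx : ¬ Function.Injective x) :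
    ∑ σ : Perm ι, ((sign σ : ℤ) : R) * g (x ∘ σ) = 0 := by
  obtain ⟨a, b, hab, hne⟩ : ∃ a b, x a = x b ∧ a ≠ b := by
    simpa [Function.Injective] using hx
  have hswap : x ∘ swap a b = x := by
    funext j
    rcases eq_or_ne j a with rfl | hja
    · simp [hab]
    rcases eq_or_ne j b with rfl | hjb
    · simp [hab]
    · simp [swap_apply_of_ne_of_ne hja hjb]
  refine sum_involution (fun σ _ => swap a b * σ) (fun σ _ => ?_) (fun σ _ _ => ?_)
    (fun _ _ => mem_univ _) (fun σ _ => swap_mul_self_mul a b σ)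
  · simp only [sign_mul, sign_swap hne, coe_mul, ← Function.comp_assoc, hswap]
    push_cast
    ring
  · rw [Ne, mul_eq_right, swap_eq_one_iff]
    exact hne

theorem sum_sign_mul_comp_eq_sum_cons {n : ℕ} (g : (Fin (n + 1) → α) → R) (x : Fin (n + 1) → α) :
    ∑ σ : Perm (Fin (n + 1)), ((sign σ : ℤ) : R) * g (x ∘ σ) =
      ∑ p : Fin (n + 1), (-1) ^ (p : ℕ) * ∑ τ : Perm (Fin n),
        ((sign τ : ℤ) : R) * g (Fin.cons (x p) (x ∘ p.succAbove ∘ τ)) := by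
  rw [← Equiv.sum_comp decomposeFin.symm, Fintype.sum_prod_type]
  refine sum_congr rfl fun p _ => ?_
  have hcomp : ∀ e : Perm (Fin n),
      x ∘ decomposeFin.symm (p, e) = Fin.cons (x p) (x ∘ swap 0 p ∘ Fin.succ ∘ e) := by
    intro e
    funext j
    refine Fin.cases ?_ (fun j => ?_) j <;> simp
  simp only [hcomp, decomposeFin.symm_sign]
  induction p using Fin.cases with
  | zero => simp
  | succ i =>
    symm
    rw [← Equiv.sum_comp (Equiv.mulLeft i.cycleRange), mul_sum]
    refine sum_congr rfl fun e _ => ?_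
    have hcyc : x ∘ swap 0 i.succ ∘ Fin.succ ∘ e = x ∘ i.succ.succAbove ∘ i.cycleRange ∘ e := by
      funext j
      simp
    have hsq : ((-1 : R)) ^ (i : ℕ) * (-1) ^ (i : ℕ) = 1 := by
      rw [← mul_pow]
      simp
    simp only [hcyc, sign_mul, Fin.sign_cycleRange, coe_mulLeft, coe_mul,
      if_neg (Fin.succ_ne_zero i), Fin.val_succ, pow_succ]
    push_cast
    linear_combination
      -((sign e : ℤ) : R) * g (Fin.cons (x i.succ) (x ∘ i.succ.succAbove ∘ i.cycleRange ∘ e)) * hsq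

end Equiv.Perm

theorem Fin.mul_prod_comp_succAbove_comp {M : Type*} [CommMonoid M] {n : ℕ}
    (x : Fin (n + 1) → M) (p : Fin (n + 1)) (τ : Perm (Fin n)) :
    x p * ∏ j, (x ∘ p.succAbove ∘ τ) j = ∏ j, x j := by
  rw [Fin.prod_univ_succAbove x p]
  congr 1
  exact Equiv.prod_comp τ (fun j => x (p.succAbove j))

theorem Lagrange.natDegree_nodal_sub_nodal_lt {R ι : Type*} [CommRing R] [Nontrivial R]
    {s : Finset ι} (hs : s.Nonempty) (u u' : ι → R) :
    (nodal s u - nodal s u').natDegree < #s := by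
  have hmonic : ∀ u : ι → R, IsMonicOfDegree (nodal s u) #s := fun u =>
    ⟨natDegree_nodal, nodal_monic⟩
  exact (hmonic u).natDegree_sub_lt hs.card_pos.ne' (hmonic u')

theorem Lagrange.exists_eval_eq_mul_prod_mul_sum {K : Type*} [Field K] {m : ℕ} {w : Fin m → K}
    (hw0 : ∀ j, w j ≠ 0) (hw : Function.Injective w) {f : K[X]} (hf : f.natDegree ≤ m)
    (hf0 : f.eval 0 = 0) :
    ∃ v : Fin m → K, ∀ x, x ≠ 0 → (∀ j, x ≠ w j) →
      f.eval x = x * (∏ j, (x - w j)) * ∑ j, v j * (x - w j)⁻¹ := by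
  set u : Fin (m + 1) → K := Fin.cons 0 w with hu_def
  have hu : Function.Injective u :=
    Fin.cons_injective_iff.mpr ⟨fun ⟨j, hj⟩ => hw0 j hj, hw⟩
  have hdeg : f.degree < #(univ : Finset (Fin (m + 1))) := by
    rw [card_univ, Fintype.card_fin]
    exact degree_le_natDegree.trans_lt (by exact_mod_cast Nat.lt_succ_of_le hf)
  refine ⟨fun j => nodalWeight univ u j.succ * f.eval (w j), fun x hx0 hxw => ?_⟩
  conv_lhs => rw [eq_interpolate hu.injOn hdeg]
  rw [eval_interpolate_not_at_node _ fun i _ => (Fin.cons hx0 hxw : ∀ i, x ≠ u i) i, eval_nodal,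
    Fin.prod_univ_succ, Fin.sum_univ_succ]
  simp only [hu_def, Fin.cons_zero, Fin.cons_succ, hf0, mul_zero, zero_add, sub_zero, mul_sum]
  refine sum_congr rfl fun j _ => ?_
  ring

theorem Matrix.sum_sum_neg_one_pow_mul_det_submatrix {R : Type*} [CommRing R] {n : ℕ}
    (M : Matrix (Fin (n + 1)) (Fin (n + 1)) R) {a b v : Fin (n + 1) → R} (hv : M *ᵥ v = a) :
    ∑ p : Fin (n + 1), ∑ q : Fin (n + 1),
        (-1) ^ ((p : ℕ) + q) * a p * b q * (M.submatrix p.succAbove q.succAbove).det =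
      M.det * (b ⬝ᵥ v) := by
  calc _ = b ⬝ᵥ (M.adjugate *ᵥ a) := by
        simp only [dotProduct, mulVec, adjugate_fin_succ_eq_det_submatrix, mul_sum]
        rw [sum_comm]
        refine sum_congr rfl fun q _ => sum_congr rfl fun p _ => ?_
        ring
    _ = M.det * (b ⬝ᵥ v) := by
        rw [← hv, mulVec_mulVec, adjugate_mul, smul_mulVec, one_mulVec, dotProduct_smul,
          smul_eq_mul]

namespace CauchySymmetrization

variable {K : Type*} [Field K]

/-- The cross-ratio `(a, b; 1, 0)`. -/
def crossRatio (a b : K) : K := b * (1 - a) / (a * (1 - b))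

theorem crossRatio_eq_mul (a b : K) : crossRatio a b = (1 - a) / a * (b / (1 - b)) := by
  rw [crossRatio, div_mul_div_comm, mul_comm b]

/-- The summand of the theorem with the order of the factors reversed, so that the full products
`∏ x / ∏ y` sit at the first index. -/
def chainTerm (n : ℕ) (x y : Fin n → K) : K :=
  (∏ j : Fin n, crossRatio (x j) (y j) ^ (n - j)) *
    (∏ k : Fin n, (1 - (∏ j ∈ Ici k, x j) / ∏ j ∈ Ici k, y j))⁻¹

theorem chainTerm_cons {n : ℕ} (a b : K) (x y : Fin n → K) :
    chainTerm (n + 1) (Fin.cons a x) (Fin.cons b y) =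
      crossRatio a b ^ (n + 1) * (1 - (a * ∏ j, x j) / (b * ∏ j, y j))⁻¹ * chainTerm n x y := by
  have hIci : ∀ f : Fin (n + 1) → K, ∏ j ∈ Ici 0, f j = f 0 * ∏ j : Fin n, f j.succ := by
    intro f
    rw [← Fin.prod_univ_succ]
    congr 1
    ext j
    simp
  simp only [chainTerm, Fin.prod_univ_succ (n := n), Fin.prod_Ici_succ, hIci, Fin.cons_zero,
    Fin.cons_succ, Fin.val_zero, Fin.val_succ, Nat.add_sub_add_right, Nat.sub_zero, mul_inv]
  ring

theorem chainTerm_comp_revPerm {n : ℕ} (x y : Fin n → K) :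
    chainTerm n (x ∘ Fin.revPerm) (y ∘ Fin.revPerm) =
      (∏ j : Fin n, crossRatio (x j) (y j) ^ ((j : ℕ) + 1)) *
        (∏ k : Fin n, (1 - (∏ j ∈ Iic k, x j) / ∏ j ∈ Iic k, y j))⁻¹ := by
  have hIic : ∀ (f : Fin n → K) (k : Fin n), ∏ j ∈ Iic k, f j = ∏ j ∈ Ici k.rev, f j.rev := by
    intro f k
    rw [← Fin.map_revPerm_Iic, prod_map]
    simp
  symm
  simp only [chainTerm, hIic, Function.comp_apply]
  congr 1
  · rw [← Equiv.prod_comp Fin.revPerm]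
    refine prod_congr rfl fun j _ => ?_
    simp only [Fin.revPerm_apply, Fin.val_rev]
    congr 1
    omega
  · rw [← Equiv.prod_comp Fin.revPerm]
    simp

def chainSum (n : ℕ) (z w : Fin n → K) : K :=
  ∑ σ₁ : Perm (Fin n), ((Perm.sign σ₁ : ℤ) : K) *
    ∑ σ₂ : Perm (Fin n), ((Perm.sign σ₂ : ℤ) : K) * chainTerm n (z ∘ σ₁) (w ∘ σ₂)

theorem sum_sum_eq_chainSum (n : ℕ) (z w : Fin n → K) :
    (∑ σ₁ : Perm (Fin n), ∑ σ₂ : Perm (Fin n),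
        ((Perm.sign σ₁ : ℤ) : K) * ((Perm.sign σ₂ : ℤ) : K) *
          (∏ j : Fin n,
            (w (σ₂ j) * (1 - z (σ₁ j)) / (z (σ₁ j) * (1 - w (σ₂ j)))) ^ ((j : ℕ) + 1)) *
          (∏ k : Fin n, (1 - (∏ j ∈ Iic k, z (σ₁ j)) / ∏ j ∈ Iic k, w (σ₂ j)))⁻¹) =
      chainSum n z w := by
  have hsummand : ∀ σ₁ σ₂ : Perm (Fin n), ((Perm.sign σ₁ : ℤ) : K) * ((Perm.sign σ₂ : ℤ) : K) *
      (∏ j : Fin n,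
        (w (σ₂ j) * (1 - z (σ₁ j)) / (z (σ₁ j) * (1 - w (σ₂ j)))) ^ ((j : ℕ) + 1)) *
      (∏ k : Fin n, (1 - (∏ j ∈ Iic k, z (σ₁ j)) / ∏ j ∈ Iic k, w (σ₂ j)))⁻¹ =
      ((Perm.sign σ₁ : ℤ) : K) * (((Perm.sign σ₂ : ℤ) : K) *
        chainTerm n (z ∘ σ₁ ∘ Fin.revPerm) (w ∘ σ₂ ∘ Fin.revPerm)) := by
    intro σ₁ σ₂
    have hchain := chainTerm_comp_revPerm (z ∘ σ₁) (w ∘ σ₂)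
    simp only [crossRatio, Function.comp_apply, Function.comp_assoc] at hchain
    rw [hchain]
    ring
  have hrev : ((Perm.sign (Fin.revPerm : Perm (Fin n)) : ℤ) : K) *
      ((Perm.sign (Fin.revPerm : Perm (Fin n)) : ℤ) : K) = 1 := by
    rw [← Int.cast_mul, ← Units.val_mul, Int.units_mul_self, Units.val_one, Int.cast_one]
  simp only [hsummand, ← mul_sum, Perm.sum_sign_mul_comp_mul (chainTerm n _) w]
  simp only [mul_left_comm _ ((Perm.sign (Fin.revPerm : Perm (Fin n)) : ℤ) : K), ← mul_sum]
  rw [Perm.sum_sign_mul_comp_mul (fun x => ∑ σ₂ : Perm (Fin n),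
    ((Perm.sign σ₂ : ℤ) : K) * chainTerm n x (w ∘ σ₂)) z, ← mul_assoc, hrev, one_mul, chainSum]

theorem chainSum_eq_zero_of_not_injective {n : ℕ} (z : Fin n → K) {w : Fin n → K}
    (hw : ¬ Function.Injective w) : chainSum n z w = 0 := by
  simp [chainSum, Perm.sum_sign_mul_comp_eq_zero _ hw]

theorem chainSum_succ {n : ℕ} (z w : Fin (n + 1) → K) :
    chainSum (n + 1) z w = ∑ p : Fin (n + 1), ∑ q : Fin (n + 1),
      (-1) ^ ((p : ℕ) + q) * crossRatio (z p) (w q) ^ (n + 1) * (1 - (∏ j, z j) / ∏ j, w j)⁻¹ *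
        chainSum n (z ∘ p.succAbove) (w ∘ q.succAbove) := by
  simp only [chainSum]
  rw [Perm.sum_sign_mul_comp_eq_sum_cons (fun x => ∑ σ₂ : Perm (Fin (n + 1)),
    ((Perm.sign σ₂ : ℤ) : K) * chainTerm (n + 1) x (w ∘ σ₂))]
  simp only [Perm.sum_sign_mul_comp_eq_sum_cons (chainTerm (n + 1) _), chainTerm_cons,
    Fin.mul_prod_comp_succAbove_comp, mul_sum, Function.comp_assoc]
  refine sum_congr rfl fun p _ => ?_
  rw [sum_comm]
  refine sum_congr rfl fun q _ => sum_congr rfl fun τ₁ _ => sum_congr rfl fun τ₂ _ => ?_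
  ring

def cauchyMatrix {ι κ : Type*} (z : ι → K) (w : κ → K) : Matrix ι κ K :=
  Matrix.of fun i j => (w j - z i)⁻¹

theorem cauchyMatrix_comp {ι κ ι' κ' : Type*} (z : ι → K) (w : κ → K) (f : ι' → ι) (g : κ' → κ) :
    cauchyMatrix (z ∘ f) (w ∘ g) = (cauchyMatrix z w).submatrix f g :=
  rfl

theorem exists_partialFractions {m : ℕ} (z w : Fin m → K) (hz0 : ∀ i, z i ≠ 0)
    (hw0 : ∀ j, w j ≠ 0) (hw : Function.Injective w) :
    ∃ v : Fin m → K, ∀ x, x ≠ 0 → (∀ j, x ≠ w j) →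
      (x - 1) * ∏ j, (x - w j) - (x - (∏ j, w j) / ∏ j, z j) * ∏ j, (x - z j) =
        x * (∏ j, (x - w j)) * ∑ j, v j * (x - w j)⁻¹ := by
  have hZ : ∏ j, z j ≠ 0 := prod_ne_zero_iff.mpr fun j _ => hz0 j
  set c := (∏ j, w j) / ∏ j, z j with hc
  set f : K[X] := Lagrange.nodal univ (Fin.cons 1 w : Fin (m + 1) → K) -
    Lagrange.nodal univ (Fin.cons c z : Fin (m + 1) → K) with hf
  have hf_eval : ∀ x, f.eval x = (x - 1) * ∏ j, (x - w j) - (x - c) * ∏ j, (x - z j) := by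
    intro x
    simp [hf, Lagrange.eval_nodal, Fin.prod_univ_succ]
  have hf0 : f.eval 0 = 0 := by
    rw [hf_eval, hc]
    simp only [zero_sub, neg_mul, one_mul, sub_neg_eq_add, prod_neg]
    field_simp
    ring
  have hdeg : f.natDegree ≤ m := Nat.le_of_lt_succ <| by
    simpa using Lagrange.natDegree_nodal_sub_nodal_lt (univ_nonempty (α := Fin (m + 1)))
      (Fin.cons 1 w) (Fin.cons c z)
  simpa only [hf_eval] using Lagrange.exists_eval_eq_mul_prod_mul_sum hw0 hw hdeg hf0

theorem exists_cauchyMatrix_mulVec_eq {m : ℕ} (z w : Fin m → K) (hz0 : ∀ i, z i ≠ 0)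
    (hw0 : ∀ j, w j ≠ 0) (hw1 : ∀ j, w j ≠ 1) (hwz : ∀ i j, w i ≠ z j)
    (hw : Function.Injective w) :
    ∃ v : Fin m → K, cauchyMatrix z w *ᵥ v = (fun i => (1 - z i) / z i) ∧
      (fun j => (1 - w j)⁻¹) ⬝ᵥ v =
        (1 - (∏ j, z j) / ∏ j, w j) * ((∏ j, (1 - z j) / z j) * ∏ j, w j / (1 - w j)) := by
  have hZ : ∏ j, z j ≠ 0 := prod_ne_zero_iff.mpr fun j _ => hz0 j
  have hW : ∏ j, w j ≠ 0 := prod_ne_zero_iff.mpr fun j _ => hw0 j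
  obtain ⟨v, hv⟩ := exists_partialFractions z w hz0 hw0 hw
  refine ⟨v, funext fun i => ?_, ?_⟩
  · have key := hv (z i) (hz0 i) fun j => (hwz j i).symm
    rw [prod_eq_zero (f := fun j => z i - z j) (mem_univ i) (sub_self _), mul_zero,
      sub_zero] at key
    have hP : ∏ j, (z i - w j) ≠ 0 :=
      prod_ne_zero_iff.mpr fun j _ => sub_ne_zero.mpr (hwz j i).symm
    have hS : ∑ j, (w j - z i)⁻¹ * v j = -∑ j, v j * (z i - w j)⁻¹ := by
      rw [← sum_neg_distrib]
      refine sum_congr rfl fun j _ => ?_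
      rw [← neg_sub, inv_neg]
      ring
    simp only [Matrix.mulVec, dotProduct, cauchyMatrix, Matrix.of_apply, hS]
    rw [eq_div_iff (hz0 i)]
    apply mul_left_cancel₀ hP
    linear_combination key
  · have key := hv 1 one_ne_zero fun j => (hw1 j).symm
    rw [sub_self, zero_mul, zero_sub, one_mul] at key
    have hQ : ∏ j, (1 - w j) ≠ 0 :=
      prod_ne_zero_iff.mpr fun j _ => sub_ne_zero.mpr (hw1 j).symm
    calc ∑ j, (1 - w j)⁻¹ * v j =
        -((1 - (∏ j, w j) / ∏ j, z j) * ∏ j, (1 - z j)) / ∏ j, (1 - w j) := by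
          rw [key, mul_div_cancel_left₀ _ hQ]
          simp_rw [mul_comm]
      _ = _ := by
          simp only [prod_div_distrib]
          field_simp
          ring

def weightedCauchyDet (n : ℕ) (z w : Fin n → K) : K :=
  (∏ j, w j ^ (n + 1) * (1 - z j) ^ n / (z j ^ n * (1 - w j) ^ n)) * (cauchyMatrix z w).det

theorem weightedCauchyDet_eq (n : ℕ) (z w : Fin n → K) :
    weightedCauchyDet n z w = (∏ j, w j) * (∏ j, (1 - z j) / z j) ^ n *
      (∏ j, w j / (1 - w j)) ^ n * (cauchyMatrix z w).det := by
  rw [weightedCauchyDet, ← prod_pow, ← prod_pow, ← prod_mul_distrib, ← prod_mul_distrib]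
  congr 1
  refine prod_congr rfl fun j _ => ?_
  simp only [div_pow]
  ring

theorem sum_sum_mul_weightedCauchyDet_succAbove {n : ℕ} (z w : Fin (n + 1) → K)
    (hz0 : ∀ i, z i ≠ 0) (hw0 : ∀ j, w j ≠ 0) (hw1 : ∀ j, w j ≠ 1) (hwz : ∀ i j, w i ≠ z j)
    (hw : Function.Injective w) (hzw : ∏ j, z j ≠ ∏ j, w j) :
    ∑ p : Fin (n + 1), ∑ q : Fin (n + 1),
        (-1) ^ ((p : ℕ) + q) * crossRatio (z p) (w q) ^ (n + 1) * (1 - (∏ j, z j) / ∏ j, w j)⁻¹ *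
          weightedCauchyDet n (z ∘ p.succAbove) (w ∘ q.succAbove) =
      weightedCauchyDet (n + 1) z w := by
  obtain ⟨v, hv, hbv⟩ := exists_cauchyMatrix_mulVec_eq z w hz0 hw0 hw1 hwz hw
  have hW : ∏ j, w j ≠ 0 := prod_ne_zero_iff.mpr fun j _ => hw0 j
  have hZW : 1 - (∏ j, z j) / ∏ j, w j ≠ 0 := by
    rwa [sub_ne_zero, ne_comm, Ne, div_eq_one_iff_eq hW]
  have hterm : ∀ p q : Fin (n + 1),
      (-1) ^ ((p : ℕ) + q) * crossRatio (z p) (w q) ^ (n + 1) * (1 - (∏ j, z j) / ∏ j, w j)⁻¹ *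
        weightedCauchyDet n (z ∘ p.succAbove) (w ∘ q.succAbove) =
      (1 - (∏ j, z j) / ∏ j, w j)⁻¹ * (∏ j, w j) * (∏ j, (1 - z j) / z j) ^ n *
        (∏ j, w j / (1 - w j)) ^ n * ((-1) ^ ((p : ℕ) + q) * ((1 - z p) / z p) *
          (1 - w q)⁻¹ * ((cauchyMatrix z w).submatrix p.succAbove q.succAbove).det) := by
    intro p q
    rw [weightedCauchyDet_eq, cauchyMatrix_comp, Fin.prod_univ_succAbove w q,
      Fin.prod_univ_succAbove (fun j => (1 - z j) / z j) p,
      Fin.prod_univ_succAbove (fun j => w j / (1 - w j)) q]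
    simp only [crossRatio_eq_mul, Function.comp_apply, div_eq_mul_inv, mul_pow]
    ring
  simp only [hterm, ← mul_sum]
  rw [Matrix.sum_sum_neg_one_pow_mul_det_submatrix _ hv, hbv, weightedCauchyDet_eq]
  field_simp
  ring

theorem chainSum_eq_weightedCauchyDet {n : ℕ} (z w : Fin n → K) (hz0 : ∀ i, z i ≠ 0)
    (hw0 : ∀ j, w j ≠ 0) (hw1 : ∀ j, w j ≠ 1) (hwz : ∀ i j, w i ≠ z j)
    (hw : Function.Injective w)
    (hST : ∀ S T : Finset (Fin n), S.card = T.card → S.Nonempty →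
      (∏ j ∈ S, z j) ≠ ∏ j ∈ T, w j) :
    chainSum n z w = weightedCauchyDet n z w := by
  induction n with
  | zero => simp [chainSum, chainTerm, weightedCauchyDet]
  | succ n ih =>
    rw [chainSum_succ, ← sum_sum_mul_weightedCauchyDet_succAbove z w hz0 hw0 hw1 hwz hw
      (hST univ univ rfl univ_nonempty)]
    refine sum_congr rfl fun p _ => sum_congr rfl fun q _ => ?_
    rw [ih (z ∘ p.succAbove) (w ∘ q.succAbove) (fun _ => hz0 _) (fun _ => hw0 _) (fun _ => hw1 _)
      (fun _ _ => hwz _ _) (hw.comp Fin.succAbove_right_injective)]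
    intro S T hcard hS
    simpa [prod_map] using hST (S.map (Fin.succAboveEmb p)) (T.map (Fin.succAboveEmb q))
      (by simpa using hcard) (hS.map)

end CauchySymmetrization

theorem symmetrization_identity_two_general (n : ℕ) (z w : Fin n → ℂ)
    (hz0 : ∀ j, z j ≠ 0) (hw0 : ∀ j, w j ≠ 0) (hw1 : ∀ j, w j ≠ 1)
    (hwz : ∀ i j, w i ≠ z j)
    (hST : ∀ S T : Finset (Fin n), S.card = T.card → S.Nonempty →
      (∏ j ∈ S, z j) ≠ ∏ j ∈ T, w j) :
    (∑ σ₁ : Perm (Fin n), ∑ σ₂ : Perm (Fin n),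
        ((Perm.sign σ₁ : ℤ) : ℂ) * ((Perm.sign σ₂ : ℤ) : ℂ) *
          (∏ j : Fin n,
            (w (σ₂ j) * (1 - z (σ₁ j)) / (z (σ₁ j) * (1 - w (σ₂ j)))) ^ ((j : ℕ) + 1)) *
          (∏ k : Fin n,
            (1 - (∏ j ∈ Finset.Iic k, z (σ₁ j)) / ∏ j ∈ Finset.Iic k, w (σ₂ j)))⁻¹) =
      (∏ j : Fin n, w j ^ (n + 1) * (1 - z j) ^ n / (z j ^ n * (1 - w j) ^ n)) *
        Matrix.det (Matrix.of fun i j : Fin n => (w j - z i)⁻¹) := by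
  rw [CauchySymmetrization.sum_sum_eq_chainSum]
  by_cases hw : Function.Injective w
  · exact CauchySymmetrization.chainSum_eq_weightedCauchyDet z w hz0 hw0 hw1 hwz hw hST
  · obtain ⟨a, b, hab, hne⟩ : ∃ a b, w a = w b ∧ a ≠ b := by
      simpa [Function.Injective] using hw
    rw [CauchySymmetrization.chainSum_eq_zero_of_not_injective z hw,
      Matrix.det_zero_of_column_eq hne fun i => by simp [hab], mul_zero]

/-- The new symmetrization identity (2.10) from Johansson's paper: under the stated
non-degeneracy conditions on `z_1,…,z_n, w_1,…,w_n`,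
`∑_{σ₁,σ₂∈S_n} sgn(σ₁)sgn(σ₂) ∏_j (w_{σ₂(j)}(1-z_{σ₁(j)})/(z_{σ₁(j)}(1-w_{σ₂(j)})))^j ·
  ∏_k (1 - z_{σ₁(1)}⋯z_{σ₁(k)}/(w_{σ₂(1)}⋯w_{σ₂(k)}))⁻¹
  = (∏_j w_j^{n+1}(1-z_j)^n/(z_j^n(1-w_j)^n)) · det(1/(w_j - z_i))`. -/
theorem symmetrization_identity_two (n : ℕ) (hn : 1 ≤ n) (z w : Fin n → ℂ)
    (hz0 : ∀ j, z j ≠ 0) (hw0 : ∀ j, w j ≠ 0) (hw1 : ∀ j, w j ≠ 1)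
    (hwz : ∀ i j, w i ≠ z j)
    (hST : ∀ S T : Finset (Fin n), S.card = T.card → S.Nonempty →
      (∏ j ∈ S, z j) ≠ ∏ j ∈ T, w j) :
    (∑ σ₁ : Perm (Fin n), ∑ σ₂ : Perm (Fin n),
        ((Perm.sign σ₁ : ℤ) : ℂ) * ((Perm.sign σ₂ : ℤ) : ℂ) *
          (∏ j : Fin n,
            (w (σ₂ j) * (1 - z (σ₁ j)) / (z (σ₁ j) * (1 - w (σ₂ j)))) ^ ((j : ℕ) + 1)) *
          (∏ k : Fin n,
            (1 - (∏ j ∈ Finset.Iic k, z (σ₁ j)) / ∏ j ∈ Finset.Iic k, w (σ₂ j)))⁻¹) =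
      (∏ j : Fin n, w j ^ (n + 1) * (1 - z j) ^ n / (z j ^ n * (1 - w j) ^ n)) *
        Matrix.det (Matrix.of fun i j : Fin n => (w j - z i)⁻¹) :=
  symmetrization_identity_two_general n z w hz0 hw0 hw1 hwz hST
end

section
/- Let n ≥ 1, let a ∈ ℝ, and let z_1,…,z_n be complex numbers with Re z_j < 0 for all j. Then det( z_j^{i−1} )_{1≤i,j≤n} = (−1)^{n(n+1)/2} ( ∏_{j=1}^n z_j^n ) · ∫_{(−∞,a]^n} ∏_{j=1}^n e^{(a−x_j) z_j} · det( (x_j−a)^{i−1}/(i−1)! )_{1≤i,j≤n} d^n x, where the integral over (−∞,a]^n converges absolutely. -/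
/-!
Absorbing the exponentials into the columns turns the integrand into the determinant of the
matrix `e^{(a-x_j) z_j} (x_j-a)^i / i!`, whose `j`-th column depends on `x_j` alone. Expanding
the determinant over permutations and applying Fubini to each term, the integral is therefore
the determinant of the one-dimensional integrals `∫_{-∞}^a e^{(a-x) z} (x-a)^i / i! dx`, which
equal `-1 / z^{i+1}` by repeated integration by parts. Finally `det(z_j^{-(i+1)})`, multiplied by
`∏ z_j^n`, is the Vandermonde determinant with its rows reversed.
-/

open MeasureTheory Set Filter Topology Equiv

theorem Nat.mul_add_one_div_two (n : ℕ) : n * (n + 1) / 2 = n * (n - 1) / 2 + n := by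
  cases n with
  | zero => rfl
  | succ k =>
    rw [Nat.add_sub_cancel, ← Nat.add_mul_div_left _ _ two_pos]
    congr 1
    ring

theorem Fin.finRotate_mul_revPerm (n : ℕ) :
    finRotate (n + 1) * Fin.revPerm = Perm.decomposeFin.symm (0, Fin.revPerm) := by
  ext i
  refine Fin.cases ?_ (fun j => ?_) i
  · simp
  · simp [Fin.rev_succ]

theorem Fin.sign_revPerm (n : ℕ) :
    Perm.sign (Fin.revPerm : Perm (Fin n)) = (-1) ^ (n * (n - 1) / 2) := by
  induction n with
  | zero => rfl
  | succ n ih =>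
    have h := congrArg Perm.sign (Fin.finRotate_mul_revPerm n)
    rw [Perm.sign_mul, sign_finRotate, Perm.decomposeFin.symm_sign, ih, if_pos rfl, one_mul,
      Nat.succ_sub_one, ← eq_inv_mul_iff_mul_eq, Int.units_inv_eq_self] at h
    rw [h, ← pow_add, Nat.add_sub_cancel, Nat.mul_comm (n + 1), Nat.mul_add_one_div_two, add_comm]

noncomputable def expMonomial (a : ℝ) (z : ℂ) (m : ℕ) (x : ℝ) : ℂ :=
  Complex.exp ((a - x) * z) * ((x - a) ^ m / m.factorial)

section expMonomial

variable {a : ℝ} {z : ℂ}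

theorem norm_expMonomial_le {c x : ℝ} (hc : 0 < c) (hx : x ≤ a) (m : ℕ) :
    ‖expMonomial a z m x‖ ≤ Real.exp ((z.re + c) * (a - x)) / c ^ m := by
  have hax : 0 ≤ a - x := sub_nonneg.2 hx
  have hpoly : (a - x) ^ m / m.factorial ≤ Real.exp (c * (a - x)) / c ^ m := by
    have := Real.pow_div_factorial_le_exp (c * (a - x)) (by positivity) m
    rw [mul_pow, mul_div_assoc] at this
    rwa [le_div_iff₀' (by positivity)]
  have hnorm :
      ‖expMonomial a z m x‖ = Real.exp ((a - x) * z.re) * ((a - x) ^ m / m.factorial) := by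
    rw [expMonomial, norm_mul, Complex.norm_exp, norm_div, norm_pow, Complex.norm_natCast,
      ← Complex.ofReal_sub, ← Complex.ofReal_sub, Complex.norm_real, Real.norm_eq_abs,
      abs_sub_comm, abs_of_nonneg hax]
    simp
  calc ‖expMonomial a z m x‖
      ≤ Real.exp ((a - x) * z.re) * (Real.exp (c * (a - x)) / c ^ m) := by
        rw [hnorm]; gcongr
    _ = Real.exp ((z.re + c) * (a - x)) / c ^ m := by
        rw [mul_div_assoc', ← Real.exp_add]; ring_nf

theorem integrableOn_expMonomial (hz : z.re < 0) (m : ℕ) :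
    IntegrableOn (expMonomial a z m) (Iic a) := by
  obtain ⟨c, hc, hcz⟩ : ∃ c : ℝ, 0 < c ∧ z.re + c < 0 :=
    ⟨-z.re / 2, by linarith, by linarith⟩
  have hbound : IntegrableOn (fun x => Real.exp ((z.re + c) * (a - x)) / c ^ m) (Iic a) := by
    have : IntegrableOn (fun x => Real.exp ((z.re + c) * a) / c ^ m * Real.exp (-(z.re + c) * x))
        (Iic a) := (integrableOn_exp_mul_Iic (by linarith) a).const_mul _
    refine this.congr_fun (fun x _ => ?_) measurableSet_Iic
    dsimp only
    rw [div_mul_eq_mul_div, ← Real.exp_add]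
    ring_nf
  refine hbound.mono' ?_ ((ae_restrict_iff' measurableSet_Iic).2 (ae_of_all _
    fun x hx => norm_expMonomial_le hc hx m))
  exact (Continuous.aestronglyMeasurable (by unfold expMonomial; fun_prop))

theorem tendsto_expMonomial_atBot (hz : z.re < 0) (m : ℕ) :
    Tendsto (expMonomial a z m) atBot (𝓝 0) := by
  obtain ⟨c, hc, hcz⟩ : ∃ c : ℝ, 0 < c ∧ z.re + c < 0 :=
    ⟨-z.re / 2, by linarith, by linarith⟩
  have hbound : Tendsto (fun x => Real.exp ((z.re + c) * (a - x)) / c ^ m) atBot (𝓝 0) := by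
    have hlin : Tendsto (fun x : ℝ => (z.re + c) * (a - x)) atBot atBot :=
      (tendsto_atTop_add_const_left _ a tendsto_neg_atBot_atTop).const_mul_atTop_of_neg hcz
    simpa using (Real.tendsto_exp_atBot.comp hlin).div_const (c ^ m)
  refine squeeze_zero_norm' ?_ hbound
  filter_upwards [eventually_le_atBot a] with x hx
  exact norm_expMonomial_le hc hx m

theorem hasDerivAt_exp_sub_mul (x : ℝ) :
    HasDerivAt (fun t : ℝ => Complex.exp ((a - t) * z)) (-z * Complex.exp ((a - x) * z)) x := by
  have h : HasDerivAt (fun t : ℝ => ((a : ℂ) - t) * z) (-z) x := by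
    simpa using (Complex.ofRealCLM.hasDerivAt.const_sub (a : ℂ)).mul_const z
  simpa [mul_comm] using h.cexp

theorem hasDerivAt_expMonomial_zero (x : ℝ) :
    HasDerivAt (expMonomial a z 0) (-z * expMonomial a z 0 x) x := by
  have h : expMonomial a z 0 = fun t : ℝ => Complex.exp ((a - t) * z) := by
    funext t; simp [expMonomial]
  rw [h]
  exact hasDerivAt_exp_sub_mul x

theorem hasDerivAt_expMonomial_succ (m : ℕ) (x : ℝ) :
    HasDerivAt (expMonomial a z (m + 1))
      (expMonomial a z m x - z * expMonomial a z (m + 1) x) x := by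
  have hpoly : HasDerivAt (fun t : ℝ => ((t : ℂ) - a) ^ (m + 1) / ((m + 1).factorial : ℂ))
      (((x : ℂ) - a) ^ m / m.factorial) x := by
    have h : HasDerivAt (fun t : ℝ => (t : ℂ)) 1 x := Complex.ofRealCLM.hasDerivAt
    refine (((h.sub_const (a : ℂ)).pow (m + 1)).div_const _).congr_deriv ?_
    rw [Nat.factorial_succ, Nat.add_sub_cancel]
    push_cast
    field_simp
  refine ((hasDerivAt_exp_sub_mul x).mul hpoly).congr_deriv ?_
  simp only [expMonomial]
  ring

theorem integral_expMonomial (hz : z.re < 0) (m : ℕ) :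
    ∫ x in Iic a, expMonomial a z m x = -(z ^ (m + 1))⁻¹ := by
  have hz0 : z ≠ 0 := fun h => by simp [h] at hz
  induction m with
  | zero =>
    have h := integral_Iic_of_hasDerivAt_of_tendsto' (a := a)
      (fun x _ => hasDerivAt_expMonomial_zero x) ((integrableOn_expMonomial hz 0).const_mul (-z))
      (tendsto_expMonomial_atBot hz 0)
    rw [integral_const_mul, show expMonomial a z 0 a = 1 by simp [expMonomial]] at h
    have hI : (∫ x in Iic a, expMonomial a z 0 x) * z = -1 := by linear_combination -h
    rw [eq_div_of_mul_eq hz0 hI]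
    ring
  | succ m ih =>
    have h := integral_Iic_of_hasDerivAt_of_tendsto' (a := a)
      (fun x _ => hasDerivAt_expMonomial_succ m x)
      ((integrableOn_expMonomial hz m).sub ((integrableOn_expMonomial hz (m + 1)).const_mul z))
      (tendsto_expMonomial_atBot hz (m + 1))
    rw [integral_sub (integrableOn_expMonomial hz m)
      ((integrableOn_expMonomial hz (m + 1)).const_mul z), integral_const_mul, ih,
      show expMonomial a z (m + 1) a = 0 by simp [expMonomial]] at h
    have hI : (∫ x in Iic a, expMonomial a z (m + 1) x) * z = -(z ^ (m + 1))⁻¹ := by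
      linear_combination -h
    rw [eq_div_of_mul_eq hz0 hI]
    ring

end expMonomial

section DetOfColumns

variable {ι 𝕜 E : Type*} [Fintype ι] [DecidableEq ι] [RCLike 𝕜] [MeasurableSpace E]
  {μ : ι → Measure E} [∀ j, SigmaFinite (μ j)] {g : ι → ι → E → 𝕜}

theorem integrable_det_of_columns (hg : ∀ i j, Integrable (g i j) (μ j)) :
    Integrable (fun x : ι → E => (Matrix.of fun i j => g i j (x j)).det) (Measure.pi μ) := by
  simp only [Matrix.det_apply', Matrix.of_apply]
  exact integrable_finsetSum _ fun σ _ =>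
    (Integrable.fintype_prod (f := fun j => g (σ j) j) fun j => hg (σ j) j).const_mul _

theorem integral_det_of_columns (hg : ∀ i j, Integrable (g i j) (μ j)) :
    ∫ x : ι → E, (Matrix.of fun i j => g i j (x j)).det ∂Measure.pi μ =
      (Matrix.of fun i j => ∫ y, g i j y ∂μ j).det := by
  simp only [Matrix.det_apply', Matrix.of_apply]
  rw [integral_finsetSum _ fun σ _ =>
    (Integrable.fintype_prod (f := fun j => g (σ j) j) fun j => hg (σ j) j).const_mul _]
  refine Finset.sum_congr rfl fun σ _ => ?_
  rw [integral_const_mul, integral_fintype_prod_eq_prod (E := fun _ => E) fun j => g (σ j) j]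

end DetOfColumns

section Vandermonde

variable {n : ℕ}

theorem Matrix.det_of_pow_rev {R : Type*} [CommRing R] (v : Fin n → R) :
    (Matrix.of fun i j : Fin n => v j ^ (n - 1 - i : ℕ)).det =
      (-1) ^ (n * (n - 1) / 2) * (Matrix.of fun i j : Fin n => v j ^ (i : ℕ)).det := by
  have hrev : (Matrix.of fun i j : Fin n => v j ^ (n - 1 - i : ℕ)) =
      (Matrix.of fun i j : Fin n => v j ^ (i : ℕ)).submatrix Fin.revPerm id := by
    ext i j
    simp only [Matrix.of_apply, Matrix.submatrix_apply, Fin.revPerm_apply, Fin.val_rev, id]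
    congr 1
    omega
  rw [hrev, Matrix.det_permute, Fin.sign_revPerm]
  push_cast
  rfl

theorem Matrix.det_of_pow_eq_mul_det_of_neg_inv_pow {K : Type*} [Field K] {z : Fin n → K}
    (hz : ∀ j, z j ≠ 0) :
    (Matrix.of fun i j : Fin n => z j ^ (i : ℕ)).det =
      (-1) ^ (n * (n + 1) / 2) * (∏ j, z j ^ n) *
        (Matrix.of fun i j : Fin n => -(z j ^ ((i : ℕ) + 1))⁻¹).det := by
  have hscale : (∏ j, z j ^ n) * (Matrix.of fun i j : Fin n => (z j ^ ((i : ℕ) + 1))⁻¹).det =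
      (Matrix.of fun i j : Fin n => z j ^ (n - 1 - i : ℕ)).det := by
    rw [← Matrix.det_mul_row]
    congr 1
    ext i j
    simp only [Matrix.of_apply]
    rw [Nat.sub_sub, add_comm 1, pow_sub₀ _ (hz j) (by omega)]
  have hneg : (Matrix.of fun i j : Fin n => -(z j ^ ((i : ℕ) + 1))⁻¹) =
      -Matrix.of fun i j : Fin n => (z j ^ ((i : ℕ) + 1))⁻¹ := rfl
  have hsign : ((-1 : K) ^ (n * (n + 1) / 2) * (-1) ^ n) * (-1) ^ (n * (n - 1) / 2) = 1 := by
    rw [← pow_add, ← pow_add, Nat.mul_add_one_div_two,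
      show n * (n - 1) / 2 + n + n + n * (n - 1) / 2 = 2 * (n * (n - 1) / 2 + n) by ring,
      pow_mul, neg_one_sq, one_pow]
  rw [hneg, Matrix.det_neg, Fintype.card_fin]
  have hrev := hscale.trans (Matrix.det_of_pow_rev z)
  generalize (-1 : K) ^ (n * (n + 1) / 2) = s₁, (-1 : K) ^ n = s₂,
    (-1 : K) ^ (n * (n - 1) / 2) = s₃ at hsign hrev ⊢
  linear_combination
    (-(s₁ * s₂)) * hrev - (Matrix.of fun i j : Fin n => z j ^ (i : ℕ)).det * hsign

end Vandermonde

theorem vandermonde_integral_representation_general (n : ℕ) (a : ℝ)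
    (z : Fin n → ℂ) (hz : ∀ j, (z j).re < 0) :
    IntegrableOn
      (fun x : Fin n → ℝ =>
        (∏ j : Fin n, Complex.exp (((a : ℂ) - (x j : ℂ)) * z j)) *
          Matrix.det (Matrix.of fun i j : Fin n =>
            ((x j : ℂ) - (a : ℂ)) ^ (i : ℕ) / (Nat.factorial (i : ℕ) : ℂ)))
      (Set.univ.pi fun _ : Fin n => Set.Iic a) volume ∧
    Matrix.det (Matrix.of fun i j : Fin n => z j ^ (i : ℕ)) =
      (-1 : ℂ) ^ (n * (n + 1) / 2) * (∏ j : Fin n, z j ^ n) *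
        ∫ x in Set.univ.pi fun _ : Fin n => Set.Iic a,
          (∏ j : Fin n, Complex.exp (((a : ℂ) - (x j : ℂ)) * z j)) *
            Matrix.det (Matrix.of fun i j : Fin n =>
              ((x j : ℂ) - (a : ℂ)) ^ (i : ℕ) / (Nat.factorial (i : ℕ) : ℂ)) := by
  have hintegrand : (fun x : Fin n → ℝ =>
      (∏ j : Fin n, Complex.exp (((a : ℂ) - (x j : ℂ)) * z j)) *
        Matrix.det (Matrix.of fun i j : Fin n =>
          ((x j : ℂ) - (a : ℂ)) ^ (i : ℕ) / (Nat.factorial (i : ℕ) : ℂ))) =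
      fun x => (Matrix.of fun i j : Fin n => expMonomial a (z j) i (x j)).det :=
    funext fun x => (Matrix.det_mul_row _ _).symm
  have hμ : volume.restrict (univ.pi fun _ : Fin n => Iic a) =
      Measure.pi fun _ => volume.restrict (Iic a) := by
    rw [volume_pi, Measure.restrict_pi_pi]
  have hg : ∀ i j : Fin n, Integrable (expMonomial a (z j) i) (volume.restrict (Iic a)) :=
    fun i j => integrableOn_expMonomial (hz j) i
  refine ⟨?_, ?_⟩
  · rw [hintegrand, IntegrableOn, hμ]
    exact integrable_det_of_columns hg
  · rw [hintegrand, hμ, integral_det_of_columns hg]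
    simp only [integral_expMonomial (hz _)]
    exact Matrix.det_of_pow_eq_mul_det_of_neg_inv_pow fun j h => by simpa [h] using hz j

/-- Identity (3.2): for `Re z_j < 0` and any `a ∈ ℝ`,
`det(z_j^{i-1}) = (-1)^{n(n+1)/2} (∏_j z_j^n) ∫_{(-∞,a]^n} ∏_j e^{(a-x_j)z_j}
 det((x_j-a)^{i-1}/(i-1)!) dⁿx`, the integral converging absolutely. -/
theorem vandermonde_integral_representation (n : ℕ) (hn : 1 ≤ n) (a : ℝ)
    (z : Fin n → ℂ) (hz : ∀ j, (z j).re < 0) :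
    IntegrableOn
      (fun x : Fin n → ℝ =>
        (∏ j : Fin n, Complex.exp (((a : ℂ) - (x j : ℂ)) * z j)) *
          Matrix.det (Matrix.of fun i j : Fin n =>
            ((x j : ℂ) - (a : ℂ)) ^ (i : ℕ) / (Nat.factorial (i : ℕ) : ℂ)))
      (Set.univ.pi fun _ : Fin n => Set.Iic a) volume ∧
    Matrix.det (Matrix.of fun i j : Fin n => z j ^ (i : ℕ)) =
      (-1 : ℂ) ^ (n * (n + 1) / 2) * (∏ j : Fin n, z j ^ n) *
        ∫ x in Set.univ.pi fun _ : Fin n => Set.Iic a,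
          (∏ j : Fin n, Complex.exp (((a : ℂ) - (x j : ℂ)) * z j)) *
            Matrix.det (Matrix.of fun i j : Fin n =>
              ((x j : ℂ) - (a : ℂ)) ^ (i : ℕ) / (Nat.factorial (i : ℕ) : ℂ)) :=
  vandermonde_integral_representation_general n a z hz
end

section
/- Let n ≥ 1, let μ > 0, τ > 0, and let x_1,…,x_n ∈ ℝ. Then det( x_j^{i−1}/(i−1)! )_{1≤i,j≤n} = (2πi)^{−n} ∮_{γ_τ} ⋯ ∮_{γ_τ} ∏_{j=1}^n e^{x_j ζ_j − (1/2)μ ζ_j^2} · det( ζ_j^{−i} )_{1≤i,j≤n} dζ_1 ⋯ dζ_n. -/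
/-!
By Cauchy's formula, `(2πi)⁻¹ ∮_{γ_τ} f(ζ) ζ^{-(i+1)} dζ` is the `i`-th Taylor coefficient of an
entire `f` at `0`. Multiplying the `j`-th column of `det(ζ_j^{-(i+1)})` by the `j`-th factor of the
product, the integrand is a determinant whose `j`-th column depends on `ζ_j` only, so the iterated
integral is `(2πi)^n det(a_i(x_j))`, where `a_i(x)` is the `i`-th Taylor coefficient of
`e^{xζ} g(ζ)` with `g(ζ) = e^{-μζ²/2}`. By Leibniz' rule `a_i(x) = ∑_{m ≤ i} g_{i-m} x^m/m!`, so
`(a_i(x_j))` is a lower unitriangular matrix (its diagonal is `g(0) = 1`) times `(x_j^i/i!)`.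
-/

open scoped BigOperators Real

open MeasureTheory

/-- The iterated contour integral `∮_{γ_{ρ_1}} ⋯ ∮_{γ_{ρ_n}} f(z_1,…,z_n) dz_n ⋯ dz_1`
over positively oriented circles `γ_{ρ_j}` of radius `ρ j` centred at the origin,
written as an integral over the angles `θ ∈ [0,2π]^n`. -/
noncomputable def circlesIntegral {n : ℕ} (ρ : Fin n → ℝ) (f : (Fin n → ℂ) → ℂ) : ℂ :=
  ∫ θ in Set.univ.pi fun _ : Fin n => Set.Ioc (0 : ℝ) (2 * π),
    (∏ j : Fin n, Complex.I * (ρ j : ℂ) * Complex.exp (Complex.I * (θ j : ℂ))) *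
      f fun j => (ρ j : ℂ) * Complex.exp (Complex.I * (θ j : ℂ))

open Complex Finset Nat

namespace Matrix

theorem det_of_sum_range_mul {R : Type*} [CommRing R] {n : ℕ} (b : ℕ → R)
    (v : ℕ → Fin n → R) :
    det (of fun i j : Fin n => ∑ m ∈ range (i + 1), b (i - m) * v m j) =
      b 0 ^ n * det (of fun i j : Fin n => v i j) := by
  set L : Matrix (Fin n) (Fin n) R := of fun i m => if m ≤ i then b (i - m) else 0
  have hL : L.IsLowerTriangular := fun i m hlt => if_neg (not_le.mpr hlt)
  have hmul : (of fun i j : Fin n => ∑ m ∈ range (i + 1), b (i - m) * v m j) =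
      L * of fun i j : Fin n => v i j := by
    ext i j
    have hrange : (range n).filter (· ≤ (i : ℕ)) = range (i + 1) := by
      ext m; simp only [mem_filter, mem_range]; omega
    simp only [L, of_apply, mul_apply, ite_mul, zero_mul, ← hrange, sum_filter,
      Fin.le_def]
    exact (Fin.sum_univ_eq_sum_range
      (fun m => if m ≤ (i : ℕ) then b (i - m) * v m j else 0) n).symm
  rw [hmul, det_mul, det_of_isLowerTriangular L hL]
  simp [L]

end Matrix

theorem iteratedDeriv_cexp_const_mul_mul_div_factorial {g : ℂ → ℂ} {k : ℕ}
    (hg : ContDiffAt ℂ k g 0) (x : ℂ) :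
    iteratedDeriv k (fun z => exp (x * z) * g z) 0 / k ! =
      ∑ m ∈ range (k + 1), iteratedDeriv (k - m) g 0 / (k - m)! * (x ^ m / m !) := by
  have hexp : ContDiffAt ℂ k (fun z => exp (x * z)) 0 := by fun_prop
  rw [iteratedDeriv_fun_mul hexp hg, sum_div]
  refine sum_congr rfl fun m hm => ?_
  have hmk : m ≤ k := mem_range_succ_iff.mp hm
  rw [iteratedDeriv_cexp_const_mul, Nat.cast_choose ℂ hmk]
  simp only [mul_zero, exp_zero, mul_one]
  have := k.factorial_ne_zero
  field_simp

theorem circleIntegral_mul_zpow_neg_succ {f : ℂ → ℂ} {R : ℝ} (hR : 0 < R)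
    (hf : DifferentiableOn ℂ f (Metric.closedBall 0 R)) (k : ℕ) :
    ∮ z in C(0, R), f z * z ^ (-((k : ℤ) + 1)) = 2 * π * I * (iteratedDeriv k f 0 / k !) := by
  have hcauchy := hf.circleIntegral_one_div_sub_center_pow_smul hR k
  simp only [sub_zero, smul_eq_mul] at hcauchy
  calc _ = ∮ z in C(0, R), 1 / z ^ (k + 1) * f z := by
        congr 1 with z
        rw [zpow_neg, ← Nat.cast_succ, zpow_natCast, one_div, mul_comm]
    _ = _ := by rw [hcauchy]; ring

theorem circleIntegral_eq_setIntegral_Ioc (R : ℝ) (F : ℂ → ℂ) :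
    ∮ z in C(0, R), F z = ∫ t in Set.Ioc 0 (2 * π),
      I * R * exp (I * t) * F (R * exp (I * t)) := by
  rw [circleIntegral, intervalIntegral.integral_of_le Real.two_pi_pos.le]
  refine setIntegral_congr_fun measurableSet_Ioc fun t _ => ?_
  simp only [deriv_circleMap, circleMap, zero_add, smul_eq_mul]
  ring_nf

theorem setIntegral_univ_pi_prod {ι E 𝕜 : Type*} [Fintype ι] [MeasureSpace E]
    [SigmaFinite (volume : Measure E)] [RCLike 𝕜] (s : ι → Set E) (G : ι → E → 𝕜) :
    ∫ θ in Set.univ.pi s, ∏ j, G j (θ j) = ∏ j, ∫ t in s j, G j t := by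
  rw [volume_pi, Measure.restrict_pi_pi, integral_fintype_prod_eq_prod]

theorem integrableOn_univ_pi_prod {ι E 𝕜 : Type*} [Fintype ι] [MeasureSpace E]
    [SigmaFinite (volume : Measure E)] [RCLike 𝕜] {s : ι → Set E} {G : ι → E → 𝕜}
    (hG : ∀ j, IntegrableOn (G j) (s j)) :
    IntegrableOn (fun θ : ι → E => ∏ j, G j (θ j)) (Set.univ.pi s) := by
  rw [IntegrableOn, volume_pi, Measure.restrict_pi_pi]
  exact Integrable.fintype_prod hG

theorem circlesIntegral_det {n : ℕ} (ρ : Fin n → ℝ) {F : Fin n → Fin n → ℂ → ℂ}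
    (hF : ∀ i j, ContinuousOn (F i j) (Metric.sphere 0 |ρ j|)) :
    circlesIntegral ρ (fun ζ => Matrix.det (Matrix.of fun i j => F i j (ζ j))) =
      Matrix.det (Matrix.of fun i j => ∮ z in C(0, ρ j), F i j z) := by
  set G : Fin n → Fin n → ℝ → ℂ := fun i j t =>
    I * ρ j * exp (I * t) * F i j (ρ j * exp (I * t))
  have hG : ∀ i j, IntegrableOn (G i j) (Set.Ioc 0 (2 * π)) := by
    intro i j
    have hmem : ∀ t : ℝ, (ρ j : ℂ) * exp (I * t) ∈ Metric.sphere 0 |ρ j| := fun t => by simp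
    refine Continuous.integrableOn_Ioc (Continuous.mul (by fun_prop) ?_)
    exact (hF i j).comp_continuous (by fun_prop) hmem
  have hexpand : ∀ θ : Fin n → ℝ,
      (∏ j, I * ρ j * exp (I * θ j)) *
          Matrix.det (Matrix.of fun i j => F i j (ρ j * exp (I * θ j))) =
        ∑ σ : Equiv.Perm (Fin n), (Equiv.Perm.sign σ : ℂ) * ∏ j, G (σ j) j (θ j) := by
    intro θ
    rw [← Matrix.det_mul_row, Matrix.det_apply']
    rfl
  simp only [circlesIntegral, hexpand]
  rw [integral_finsetSum _ fun σ _ => (integrableOn_univ_pi_prod fun j => hG (σ j) j).const_mul _,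
    Matrix.det_apply']
  refine sum_congr rfl fun σ _ => ?_
  rw [integral_const_mul, setIntegral_univ_pi_prod]
  simp only [G, Matrix.of_apply, circleIntegral_eq_setIntegral_Ioc]

theorem circlesIntegral_prod_mul_det_zpow {n : ℕ} {τ : ℝ} (hτ : 0 < τ) {f : Fin n → ℂ → ℂ}
    (hf : ∀ j, DifferentiableOn ℂ (f j) (Metric.closedBall 0 τ)) :
    circlesIntegral (fun _ : Fin n => τ) (fun ζ =>
        (∏ j, f j (ζ j)) * Matrix.det (Matrix.of fun i j : Fin n => ζ j ^ (-((i : ℕ) + 1) : ℤ))) =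
      (2 * π * I) ^ n *
        Matrix.det (Matrix.of fun i j : Fin n => iteratedDeriv i (f j) 0 / (i : ℕ)!) := by
  have hcont : ∀ i j : Fin n, ContinuousOn (fun z => f j z * z ^ (-((i : ℕ) + 1) : ℤ))
      (Metric.sphere 0 |τ|) := by
    intro i j
    rw [abs_of_pos hτ]
    refine ((hf j).continuousOn.mono Metric.sphere_subset_closedBall).mul
      (continuousOn_id.zpow₀ _ fun z hz => Or.inl ?_)
    exact ne_zero_of_mem_sphere hτ.ne' ⟨z, hz⟩
  simp only [← Matrix.det_mul_row, Matrix.of_apply]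
  rw [circlesIntegral_det _ hcont]
  simp only [circleIntegral_mul_zpow_neg_succ hτ (hf _)]
  exact (Matrix.det_mul_column (fun _ => 2 * π * I)
    (Matrix.of fun i j : Fin n => iteratedDeriv i (f j) 0 / (i : ℕ)!)).trans (by simp)

theorem circlesIntegral_prod_cexp_mul_det_zpow {n : ℕ} {τ : ℝ} (hτ : 0 < τ) {g : ℂ → ℂ}
    (hg : Differentiable ℂ g) (x : Fin n → ℂ) :
    circlesIntegral (fun _ : Fin n => τ) (fun ζ =>
        (∏ j, exp (x j * ζ j) * g (ζ j)) *
          Matrix.det (Matrix.of fun i j : Fin n => ζ j ^ (-((i : ℕ) + 1) : ℤ))) =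
      (2 * π * I) ^ n * (g 0 ^ n *
        Matrix.det (Matrix.of fun i j : Fin n => x j ^ (i : ℕ) / (i : ℕ)!)) := by
  rw [circlesIntegral_prod_mul_det_zpow (f := fun j z => exp (x j * z) * g z) hτ
    fun j => (by fun_prop : Differentiable ℂ _).differentiableOn]
  simp only [iteratedDeriv_cexp_const_mul_mul_div_factorial hg.contDiff.contDiffAt]
  rw [Matrix.det_of_sum_range_mul (fun k => iteratedDeriv k g 0 / k !) fun m j => x j ^ m / m !]
  simp

theorem hermite_contour_identity_general (n : ℕ) (μ τ : ℝ)
    (hτ : 0 < τ) (x : Fin n → ℝ) :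
    (Matrix.det (Matrix.of fun i j : Fin n =>
        ((x j : ℂ)) ^ (i : ℕ) / (Nat.factorial (i : ℕ) : ℂ)) : ℂ) =
      (2 * (π : ℂ) * Complex.I) ^ (-(n : ℤ)) *
        circlesIntegral (fun _ : Fin n => τ) (fun ζ =>
          (∏ j : Fin n,
            Complex.exp ((x j : ℂ) * ζ j - (μ : ℂ) / 2 * ζ j ^ 2)) *
            Matrix.det (Matrix.of fun i j : Fin n => ζ j ^ (-((i : ℕ) + 1) : ℤ))) := by
  have hsplit : ∀ z w : ℂ, exp (z * w - μ / 2 * w ^ 2) = exp (z * w) * exp (-(μ / 2) * w ^ 2) :=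
    fun z w => by rw [← exp_add, neg_mul, ← sub_eq_add_neg]
  simp only [hsplit]
  rw [circlesIntegral_prod_cexp_mul_det_zpow (g := fun w => exp (-(μ / 2) * w ^ 2)) hτ
    (by fun_prop), zpow_neg, zpow_natCast]
  simp

/-- Identity (3.5): for `μ > 0`, `τ > 0` and real `x_1,…,x_n`,
`det(x_j^{i-1}/(i-1)!) = (2πi)^{-n} ∮_{γ_τ}⋯∮_{γ_τ}
  ∏_j e^{x_j ζ_j - μ ζ_j²/2} det(ζ_j^{-i}) dζ_1⋯dζ_n`. -/
theorem hermite_contour_identity (n : ℕ) (hn : 1 ≤ n) (μ τ : ℝ)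
    (hμ : 0 < μ) (hτ : 0 < τ) (x : Fin n → ℝ) :
    (Matrix.det (Matrix.of fun i j : Fin n =>
        ((x j : ℂ)) ^ (i : ℕ) / (Nat.factorial (i : ℕ) : ℂ)) : ℂ) =
      (2 * (π : ℂ) * Complex.I) ^ (-(n : ℤ)) *
        circlesIntegral (fun _ : Fin n => τ) (fun ζ =>
          (∏ j : Fin n,
            Complex.exp ((x j : ℂ) * ζ j - (μ : ℂ) / 2 * ζ j ^ 2)) *
            Matrix.det (Matrix.of fun i j : Fin n => ζ j ^ (-((i : ℕ) + 1) : ℤ))) :=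
  hermite_contour_identity_general n μ τ hτ x
end

section
/- Let n ≥ 1 and let z_1,…,z_n, w_1,…,w_n be complex numbers such that the z_j are pairwise distinct, the w_j are pairwise distinct, z_k ≠ 0 for all k, w_ℓ ≠ 1 for all ℓ, and w_ℓ ≠ z_k for all k, ℓ. Then (−1)^{n−1} ∑_{k=1}^n ∑_{ℓ=1}^n ( (1−z_k) / ( z_k (1−w_ℓ)(w_ℓ−z_k) ) ) · ( ∏_{j=1}^n (w_ℓ−z_j)(w_j−z_k) ) / ( ∏_{j≠ℓ} (w_ℓ−w_j) · ∏_{j≠k} (z_k−z_j) ) = ∏_{j=1}^n ( w_j(1−z_j) ) / ( z_j(1−w_j) ) − ∏_{j=1}^n (1−z_j)/(1−w_j). -/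
/-!
Lagrange's formula `coeff_{m-1} f = ∑ᵢ f(vᵢ) / ∏_{j≠i} (vᵢ - vⱼ)` (for `deg f < m` and `m` distinct
nodes), applied to the nodes `u₁, …, uₙ` together with one extra node `a`, evaluates the partial
fraction sums `∑ᵢ f(uᵢ) / ((uᵢ - a) ∏_{j≠i} (uᵢ - uⱼ))` in terms of `f(a)`. After cancelling
`w_ℓ - z_k`, the summand splits into a factor depending on `k` only and the term of such a sum over
the nodes `w` with extra node `1`, for `f = ∏_{j≠k} (X - z_j)` of degree `n - 1`; the resulting sum
over `k` is again of this form, over the nodes `z` with extra node `0`, for the monic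
`f = ∏_j (X - w_j)` of degree `n`.
-/

open Finset Polynomial

theorem Finset.erase_none_insertNone {ι : Type*} [DecidableEq ι] (s : Finset ι) :
    (insertNone s).erase none = s.map Function.Embedding.some := by
  ext (_ | x) <;> simp

theorem Finset.erase_some_insertNone {ι : Type*} [DecidableEq ι] (s : Finset ι) (i : ι) :
    (insertNone s).erase (some i) = insertNone (s.erase i) := by
  ext (_ | x) <;> simp

namespace Lagrange

variable {F ι κ : Type*} [Field F] [DecidableEq ι] {s : Finset ι} {u : ι → F} {a : F}

theorem coeff_card_eq_eval_div_add_sum (hu : Set.InjOn u s) (ha : ∀ i ∈ s, u i ≠ a)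
    {f : F[X]} (hf : f.degree ≤ #s) :
    f.coeff #s = f.eval a / ∏ j ∈ s, (a - u j) +
      ∑ i ∈ s, f.eval (u i) / ((u i - a) * ∏ j ∈ s.erase i, (u i - u j)) := by
  have hinj : Set.InjOn (fun o : Option ι => o.elim a u) (insertNone s) := by
    rintro (_ | x) hx (_ | y) hy h
    · rfl
    · exact absurd h.symm (ha y (by simpa using hy))
    · exact absurd h (ha x (by simpa using hx))
    · rw [hu (by simpa using hx) (by simpa using hy) h]
  have h := coeff_eq_sum hinj (P := f) <| by
    rw [card_insertNone, Nat.cast_add, Nat.cast_one]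
    exact hf.trans_lt (by exact_mod_cast Nat.lt_succ_self _)
  rw [card_insertNone, Nat.add_sub_cancel] at h
  rw [h, sum_insertNone, erase_none_insertNone, prod_map]
  simp [erase_some_insertNone]

theorem sum_prod_sub_div_of_card_lt (hu : Set.InjOn u s) (ha : ∀ i ∈ s, u i ≠ a)
    {t : Finset κ} (ht : #t < #s) (w : κ → F) :
    ∑ i ∈ s, (∏ j ∈ t, (u i - w j)) / ((u i - a) * ∏ j ∈ s.erase i, (u i - u j)) =
      -((∏ j ∈ t, (a - w j)) / ∏ j ∈ s, (a - u j)) := by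
  have h := coeff_card_eq_eval_div_add_sum hu ha (f := nodal t w)
    (by rw [degree_nodal]; exact_mod_cast ht.le)
  rw [coeff_eq_zero_of_natDegree_lt (by rwa [natDegree_nodal])] at h
  simp only [eval_nodal] at h
  linear_combination -h

theorem sum_prod_sub_div_of_card_eq (hu : Set.InjOn u s) (ha : ∀ i ∈ s, u i ≠ a)
    {t : Finset κ} (ht : #t = #s) (w : κ → F) :
    ∑ i ∈ s, (∏ j ∈ t, (u i - w j)) / ((u i - a) * ∏ j ∈ s.erase i, (u i - u j)) =
      1 - (∏ j ∈ t, (a - w j)) / ∏ j ∈ s, (a - u j) := by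
  have h := coeff_card_eq_eval_div_add_sum hu ha (f := nodal t w)
    (by rw [degree_nodal, ht])
  rw [← ht, ← natDegree_nodal (v := w), nodal_monic.coeff_natDegree] at h
  simp only [eval_nodal] at h
  linear_combination -h

end Lagrange

section ResidueSum

variable {F ι : Type*} [Field F] [Fintype ι] [DecidableEq ι] {z w : ι → F}

theorem residue_summand_eq_mul {k l : ι} (h : w l ≠ z k) :
    (1 - z k) / (z k * (1 - w l) * (w l - z k)) *
        ((∏ j, (w l - z j) * (w j - z k)) /
          ((∏ j ∈ univ.erase l, (w l - w j)) * ∏ j ∈ univ.erase k, (z k - z j))) =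
      -((1 - z k) * (∏ j, (w j - z k)) / (z k * ∏ j ∈ univ.erase k, (z k - z j))) *
        ((∏ j ∈ univ.erase k, (w l - z j)) / ((w l - 1) * ∏ j ∈ univ.erase l, (w l - w j))) := by
  rw [prod_mul_distrib, ← mul_prod_erase univ (fun j => w l - z j) (mem_univ k),
    ← neg_sub (w l) 1]
  simp only [div_eq_mul_inv, mul_inv, inv_neg]
  linear_combination -(1 - z k) * (∏ j, (w j - z k)) * (z k)⁻¹ *
      (∏ j ∈ univ.erase k, (z k - z j))⁻¹ * (∏ j ∈ univ.erase k, (w l - z j)) * (w l - 1)⁻¹ *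
      (∏ j ∈ univ.erase l, (w l - w j))⁻¹ * mul_inv_cancel₀ (sub_ne_zero.mpr h)

theorem sum_residue_summand_right (hw : Function.Injective w) (hw1 : ∀ l, w l ≠ 1) {k : ι}
    (hwz : ∀ l, w l ≠ z k) :
    ∑ l, (1 - z k) / (z k * (1 - w l) * (w l - z k)) *
        ((∏ j, (w l - z j) * (w j - z k)) /
          ((∏ j ∈ univ.erase l, (w l - w j)) * ∏ j ∈ univ.erase k, (z k - z j))) =
      (∏ j, (1 - z j)) / (∏ j, (1 - w j)) *
        ((∏ j, (w j - z k)) / (z k * ∏ j ∈ univ.erase k, (z k - z j))) := by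
  rw [sum_congr rfl fun l _ => residue_summand_eq_mul (hwz l), ← mul_sum,
    Lagrange.sum_prod_sub_div_of_card_lt (s := univ) hw.injOn (fun l _ => hw1 l)
      (card_erase_lt_of_mem (mem_univ k)),
    ← mul_prod_erase univ (fun j => 1 - z j) (mem_univ k)]
  ring

theorem sum_prod_sub_div_mul_prod_erase (hz : Function.Injective z) (hz0 : ∀ k, z k ≠ 0) :
    ∑ k, (∏ j, (w j - z k)) / (z k * ∏ j ∈ univ.erase k, (z k - z j)) =
      (-1) ^ Fintype.card ι * (1 - (∏ j, w j) / ∏ j, z j) := by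
  have h := Lagrange.sum_prod_sub_div_of_card_eq (s := univ) hz.injOn (a := 0)
    (fun k _ => hz0 k) rfl w
  simp only [sub_zero, zero_sub, prod_neg] at h
  rw [mul_div_mul_left _ _ (pow_ne_zero _ (by norm_num : (-1 : F) ≠ 0))] at h
  simp only [← neg_sub (z _) (w _), prod_neg, card_univ, mul_div_assoc, ← mul_sum, h]

end ResidueSum

theorem double_sum_residue_identity_general (n : ℕ) (z w : Fin n → ℂ)
    (hz : Function.Injective z) (hw : Function.Injective w)
    (hz0 : ∀ k, z k ≠ 0) (hw1 : ∀ l, w l ≠ 1) (hwz : ∀ k l, w l ≠ z k) :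
    (-1 : ℂ) ^ (n - 1) *
        ∑ k : Fin n, ∑ l : Fin n,
          (1 - z k) / (z k * (1 - w l) * (w l - z k)) *
            ((∏ j : Fin n, (w l - z j) * (w j - z k)) /
              ((∏ j ∈ univ.erase l, (w l - w j)) * ∏ j ∈ univ.erase k, (z k - z j))) =
      (∏ j : Fin n, w j * (1 - z j) / (z j * (1 - w j))) -
        ∏ j : Fin n, (1 - z j) / (1 - w j) := by
  cases n with
  | zero => simp
  | succ n =>
  have hsign : (-1 : ℂ) ^ n * (-1) ^ n = 1 := by rw [← mul_pow, neg_one_mul, neg_neg, one_pow]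
  rw [sum_congr rfl fun k _ => sum_residue_summand_right hw hw1 fun l => hwz k l, ← mul_sum,
    sum_prod_sub_div_mul_prod_erase hz hz0, prod_div_distrib, prod_div_distrib, prod_mul_distrib,
    prod_mul_distrib, Fintype.card_fin, Nat.add_sub_cancel, pow_succ]
  linear_combination
    -((∏ j, (1 - z j)) / (∏ j, (1 - w j)) * (1 - (∏ j, w j) / ∏ j, z j)) * hsign

/-- The rational-function identity (5.4) of Johansson's paper: for pairwise distinct
`z_1,…,z_n` and pairwise distinct `w_1,…,w_n` with `z_k ≠ 0`, `w_ℓ ≠ 1`, `w_ℓ ≠ z_k`,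
`(-1)^{n-1} ∑_{k,ℓ} (1-z_k)/(z_k(1-w_ℓ)(w_ℓ-z_k)) · ∏_j (w_ℓ-z_j)(w_j-z_k) /
 (∏_{j≠ℓ}(w_ℓ-w_j) ∏_{j≠k}(z_k-z_j)) = ∏_j w_j(1-z_j)/(z_j(1-w_j)) - ∏_j (1-z_j)/(1-w_j)`. -/
theorem double_sum_residue_identity (n : ℕ) (hn : 1 ≤ n) (z w : Fin n → ℂ)
    (hz : Function.Injective z) (hw : Function.Injective w)
    (hz0 : ∀ k, z k ≠ 0) (hw1 : ∀ l, w l ≠ 1) (hwz : ∀ k l, w l ≠ z k) :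
    (-1 : ℂ) ^ (n - 1) *
        ∑ k : Fin n, ∑ l : Fin n,
          (1 - z k) / (z k * (1 - w l) * (w l - z k)) *
            ((∏ j : Fin n, (w l - z j) * (w j - z k)) /
              ((∏ j ∈ univ.erase l, (w l - w j)) * ∏ j ∈ univ.erase k, (z k - z j))) =
      (∏ j : Fin n, w j * (1 - z j) / (z j * (1 - w j))) -
        ∏ j : Fin n, (1 - z j) / (1 - w j) :=
  double_sum_residue_identity_general n z w hz hw hz0 hw1 hwz
end

section
/- Let N_1 ≥ 1 and ν_1, λ_1, x, d_1 ∈ ℝ. Set L = N_1 + ν_1 N_1^{2/3} + x N_1^{1/3}, μ_1 = N_1 − ν_1 N_1^{2/3}, ξ_1 = 2N_1 + λ_1 N_1^{1/3}, and define g_1(t) = (L/2)·log( (1 + d_1 N_1^{−1/3})^2 + N_1^{−2/3} t^2 ) + (μ_1/2)·( (1 + d_1 N_1^{−1/3})^2 − N_1^{−2/3} t^2 ) − ξ_1 (1 + d_1 N_1^{−1/3}) for t ∈ ℝ, and Δ_1 = d_1 − ν_1 + (1/2)(d_1^2 − 2ν_1 d_1 − x) N_1^{−1/3} − (1/2) ν_1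 d_1^2 N_1^{−2/3}. Assume 1 ≤ d_1 ≤ N_1^{1/3}, 1 ≤ Δ_1 ≤ N_1^{1/3}, and ν_1 ≤ (1/2) N_1^{1/3}. Then g_1(t) − g_1(0) ≤ −(Δ_1/20)·t^2 for all t ∈ ℝ. -/
/-!
With `p = N₁^{1/3}`, `a = 1 + d₁/p` and `s = t²/p²`, the constant `ξ₁`-term cancels and
`g₁(t) - g₁(0) = (L/2) log(1 + s/a²) - (μ₁/2) s`. The KPZ scaling makes `μ₁a² - L = 2p²Δ₁`,
so with `u = s/a²` this is `m (log(1+u) - u) - D log(1+u)` for `m = μ₁a²/2` and `D = p²Δ₁`.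
Since `0 ≤ log(1+u) ≤ u`, as long as `D ≤ 4m` (which `ν₁ ≤ p/2`, `Δ₁ ≤ p` guarantee) one may
replace `m` by `D/4`, and the sum is at most `-(D/4) u`; since `a ≤ 2` this beats `-(Δ₁/20) t²`.
-/

open Real

lemma mul_log_one_add_sub_le {m D u : ℝ} (hD : 0 ≤ D) (hDm : D ≤ 4 * m) (hu : 0 ≤ u) :
    m * (log (1 + u) - u) - D * log (1 + u) ≤ -(D / 4) * u := by
  have hlog_le : log (1 + u) ≤ u := by linarith [log_le_sub_one_of_pos (by linarith : 0 < 1 + u)]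
  have hlog_nonneg : 0 ≤ log (1 + u) := log_nonneg (by linarith)
  nlinarith [mul_nonneg (by linarith : 0 ≤ m - D / 4) (sub_nonneg.2 hlog_le)]

lemma log_sq_add_descent {a s μ D : ℝ} (ha : a ≠ 0) (hs : 0 ≤ s) (hD : 0 ≤ D)
    (hDμ : D ≤ 2 * μ * a ^ 2) :
    (μ * a ^ 2 - 2 * D) / 2 * (log (a ^ 2 + s) - log (a ^ 2)) - μ / 2 * s
      ≤ -(D / 4) * (s / a ^ 2) := by
  have ha2 : a ^ 2 ≠ 0 := by positivity
  obtain ⟨u, hu, rfl⟩ : ∃ u, 0 ≤ u ∧ s = a ^ 2 * u := ⟨s / a ^ 2, by positivity, by field_simp⟩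
  have hlog : log (a ^ 2 + a ^ 2 * u) - log (a ^ 2) = log (1 + u) := by
    rw [← log_div (by positivity) ha2]; congr 1; field_simp
  rw [hlog, mul_div_cancel_left₀ u ha2]
  have := mul_log_one_add_sub_le (m := μ * a ^ 2 / 2) hD (by linarith) hu
  linarith

lemma rpow_thirds_eq_pow {N : ℝ} (hN : 0 ≤ N) :
    N ^ ((2 : ℝ) / 3) = (N ^ ((1 : ℝ) / 3)) ^ 2 ∧ N ^ (-(1 : ℝ) / 3) = (N ^ ((1 : ℝ) / 3))⁻¹ ∧
      N ^ (-(2 : ℝ) / 3) = ((N ^ ((1 : ℝ) / 3)) ^ 2)⁻¹ ∧ N = (N ^ ((1 : ℝ) / 3)) ^ 3 := by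
  have hpow (k : ℝ) : N ^ (k / 3) = (N ^ ((1 : ℝ) / 3)) ^ k := by
    rw [← rpow_mul hN]; ring_nf
  refine ⟨?_, ?_, ?_, ?_⟩
  · rw [hpow, rpow_two]
  · rw [hpow, rpow_neg_one]
  · rw [hpow, rpow_neg (by positivity), rpow_two]
  · rw [← rpow_natCast, ← hpow]; norm_num

lemma kpz_scaling_identity {p : ℝ} (hp : p ≠ 0) (ν x d : ℝ) :
    (p ^ 3 - ν * p ^ 2) * (1 + d * p⁻¹) ^ 2 - (p ^ 3 + ν * p ^ 2 + x * p) =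
      2 * ((d - ν + 1 / 2 * (d ^ 2 - 2 * ν * d - x) * p⁻¹ - 1 / 2 * ν * d ^ 2 * (p ^ 2)⁻¹)
        * p ^ 2) := by
  field_simp
  ring

lemma le_two_mul_kpz_mu_mul_sq {p ν d Δ : ℝ} (hp : 0 < p) (hd : 0 ≤ d) (hΔ : Δ ≤ p)
    (hν : ν ≤ 1 / 2 * p) :
    Δ * p ^ 2 ≤ 2 * (p ^ 3 - ν * p ^ 2) * (1 + d * p⁻¹) ^ 2 := by
  have hμ : p ^ 3 ≤ 2 * (p ^ 3 - ν * p ^ 2) := by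
    nlinarith [mul_le_mul_of_nonneg_right hν (sq_nonneg p)]
  have ha : 1 ≤ (1 + d * p⁻¹) ^ 2 := one_le_pow₀ (by simp only [le_add_iff_nonneg_right]; positivity)
  calc Δ * p ^ 2 ≤ p * p ^ 2 := by gcongr
    _ ≤ 2 * (p ^ 3 - ν * p ^ 2) * 1 := by linarith
    _ ≤ _ := mul_le_mul_of_nonneg_left ha (by linarith [pow_pos hp 3])

theorem steepest_descent_line_estimate_general (N₁ ν₁ x d₁ L μ₁ ξ₁ Δ₁ : ℝ) (g₁ : ℝ → ℝ)
    (hN₁ : 1 ≤ N₁)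
    (hL : L = N₁ + ν₁ * N₁ ^ ((2 : ℝ) / 3) + x * N₁ ^ ((1 : ℝ) / 3))
    (hμ₁ : μ₁ = N₁ - ν₁ * N₁ ^ ((2 : ℝ) / 3))
    (hg₁ : ∀ t : ℝ, g₁ t =
      L / 2 * Real.log ((1 + d₁ * N₁ ^ (-(1 : ℝ) / 3)) ^ 2 + N₁ ^ (-(2 : ℝ) / 3) * t ^ 2) +
        μ₁ / 2 * ((1 + d₁ * N₁ ^ (-(1 : ℝ) / 3)) ^ 2 - N₁ ^ (-(2 : ℝ) / 3) * t ^ 2) -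
        ξ₁ * (1 + d₁ * N₁ ^ (-(1 : ℝ) / 3)))
    (hΔ₁ : Δ₁ = d₁ - ν₁ + 1 / 2 * (d₁ ^ 2 - 2 * ν₁ * d₁ - x) * N₁ ^ (-(1 : ℝ) / 3) -
      1 / 2 * ν₁ * d₁ ^ 2 * N₁ ^ (-(2 : ℝ) / 3))
    (hd₁l : 1 ≤ d₁) (hd₁u : d₁ ≤ N₁ ^ ((1 : ℝ) / 3))
    (hΔ₁l : 1 ≤ Δ₁) (hΔ₁u : Δ₁ ≤ N₁ ^ ((1 : ℝ) / 3))
    (hν₁ : ν₁ ≤ 1 / 2 * N₁ ^ ((1 : ℝ) / 3)) :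
    ∀ t : ℝ, g₁ t - g₁ 0 ≤ -(Δ₁ / 20) * t ^ 2 := by
  intro t
  obtain ⟨h23, hm13, hm23, hN_eq⟩ := rpow_thirds_eq_pow (by linarith : 0 ≤ N₁)
  have hp : 0 < N₁ ^ ((1 : ℝ) / 3) := by positivity
  simp only [h23, hm13, hm23] at hL hμ₁ hg₁ hΔ₁
  clear h23 hm13 hm23
  generalize N₁ ^ ((1 : ℝ) / 3) = p at *
  subst hN_eq
  have hΔμ : Δ₁ * p ^ 2 ≤ 2 * μ₁ * (1 + d₁ * p⁻¹) ^ 2 := by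
    rw [hμ₁]; exact le_two_mul_kpz_mu_mul_sq hp (by linarith) hΔ₁u hν₁
  have hL_eq : L = μ₁ * (1 + d₁ * p⁻¹) ^ 2 - 2 * (Δ₁ * p ^ 2) := by
    rw [hL, hμ₁, hΔ₁, ← kpz_scaling_identity hp.ne']; ring
  set a := 1 + d₁ * p⁻¹
  have ha_le : a ≤ 2 := by
    have : d₁ * p⁻¹ ≤ 1 := by rw [← div_eq_mul_inv, div_le_one hp]; exact hd₁u
    linarith
  rw [hg₁, hg₁, zero_pow two_ne_zero, mul_zero, add_zero, sub_zero]
  calc _ = L / 2 * (log (a ^ 2 + (p ^ 2)⁻¹ * t ^ 2) - log (a ^ 2))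
        - μ₁ / 2 * ((p ^ 2)⁻¹ * t ^ 2) := by ring
    _ ≤ -(Δ₁ * p ^ 2 / 4) * ((p ^ 2)⁻¹ * t ^ 2 / a ^ 2) := by
        rw [hL_eq]; exact log_sq_add_descent (by positivity) (by positivity) (by positivity) hΔμ
    _ = -(Δ₁ / 4) * t ^ 2 / a ^ 2 := by field_simp
    _ ≤ -(Δ₁ / 20) * t ^ 2 := by
        have ha : 0 < a := by positivity
        rw [div_le_iff₀ (by positivity)]
        nlinarith [mul_nonneg (mul_nonneg (by linarith : (0 : ℝ) ≤ Δ₁) (sq_nonneg t))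
          (by nlinarith : 0 ≤ 4 - a ^ 2)]

/-- Steepest-descent estimate (6.6) of Lemma 6.1: under the KPZ scaling
`L = N₁ + ν₁N₁^{2/3} + xN₁^{1/3}`, `μ₁ = N₁ - ν₁N₁^{2/3}`, `ξ₁ = 2N₁ + λ₁N₁^{1/3}`,
with `1 ≤ d₁ ≤ N₁^{1/3}`, `1 ≤ Δ₁ ≤ N₁^{1/3}` and `ν₁ ≤ N₁^{1/3}/2`, the function
`g₁(t) = (L/2)log((1+d₁N₁^{-1/3})² + N₁^{-2/3}t²) + (μ₁/2)((1+d₁N₁^{-1/3})² - N₁^{-2/3}t²)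
 - ξ₁(1+d₁N₁^{-1/3})` satisfies `g₁(t) - g₁(0) ≤ -(Δ₁/20)t²` for all real `t`. -/
theorem steepest_descent_line_estimate (N₁ ν₁ lam₁ x d₁ L μ₁ ξ₁ Δ₁ : ℝ) (g₁ : ℝ → ℝ)
    (hN₁ : 1 ≤ N₁)
    (hL : L = N₁ + ν₁ * N₁ ^ ((2 : ℝ) / 3) + x * N₁ ^ ((1 : ℝ) / 3))
    (hμ₁ : μ₁ = N₁ - ν₁ * N₁ ^ ((2 : ℝ) / 3))
    (hξ₁ : ξ₁ = 2 * N₁ + lam₁ * N₁ ^ ((1 : ℝ) / 3))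
    (hg₁ : ∀ t : ℝ, g₁ t =
      L / 2 * Real.log ((1 + d₁ * N₁ ^ (-(1 : ℝ) / 3)) ^ 2 + N₁ ^ (-(2 : ℝ) / 3) * t ^ 2) +
        μ₁ / 2 * ((1 + d₁ * N₁ ^ (-(1 : ℝ) / 3)) ^ 2 - N₁ ^ (-(2 : ℝ) / 3) * t ^ 2) -
        ξ₁ * (1 + d₁ * N₁ ^ (-(1 : ℝ) / 3)))
    (hΔ₁ : Δ₁ = d₁ - ν₁ + 1 / 2 * (d₁ ^ 2 - 2 * ν₁ * d₁ - x) * N₁ ^ (-(1 : ℝ) / 3) -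
      1 / 2 * ν₁ * d₁ ^ 2 * N₁ ^ (-(2 : ℝ) / 3))
    (hd₁l : 1 ≤ d₁) (hd₁u : d₁ ≤ N₁ ^ ((1 : ℝ) / 3))
    (hΔ₁l : 1 ≤ Δ₁) (hΔ₁u : Δ₁ ≤ N₁ ^ ((1 : ℝ) / 3))
    (hν₁ : ν₁ ≤ 1 / 2 * N₁ ^ ((1 : ℝ) / 3)) :
    ∀ t : ℝ, g₁ t - g₁ 0 ≤ -(Δ₁ / 20) * t ^ 2 :=
  steepest_descent_line_estimate_general N₁ ν₁ x d₁ L μ₁ ξ₁ Δ₁ g₁ hN₁ hL hμ₁ hg₁ hΔ₁ hd₁l hd₁u hΔ₁l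
    hΔ₁u hν₁
end

section
/- Let N_1 ≥ 1 and ν_1, λ_1, y, d_2 ∈ ℝ. Set K = N_1 + ν_1 N_1^{2/3} + y N_1^{1/3}, μ_1 = N_1 − ν_1 N_1^{2/3}, ξ_1 = 2N_1 + λ_1 N_1^{1/3}, and define h_1(s) = K·log(1 − d_2 N_1^{−1/3}) + (μ_1/2)·(1 − d_2 N_1^{−1/3})^2·cos(2 N_1^{−1/3} s) − ξ_1·(1 − d_2 N_1^{−1/3})·cos(N_1^{−1/3} s) for s ∈ ℝ, and Δ_2 = 2(d_2 + ν_1) + (λ_1 − 2ν_1 d_2) N_1^{−1/3}. Assume 1 ≤ d_2 ≤ (1/2) N_1^{1/3}, Δ_2 ≥ 1, and ν_1 ≤ N_1^{1/3}. Then h_1(s) − h_1(0) ≥ (Δ_2/20)·s^2 for all s with |s| ≤ π N_1^{1/3}. -/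
/-!
Write `n = N₁^{1/3}`, `r = 1 - d₂/n` and `u = s/n`. The logarithmic term of `h₁` does not depend
on `s`, and the half-angle formulas factor the rest as
`h₁(s) - h₁(0) = 2r sin²(u/2) (ξ₁ - 2μ₁ r cos²(u/2))`.
The scaling is tuned so that `ξ₁ - 2μ₁ r = Δ₂ n²`; as `μ₁ r ≥ 0` the bracket is at least `Δ₂ n²`.
With `2r ≥ 1` and Jordan's inequality `sin²(u/2) ≥ u²/π²` (valid since `|u| ≤ π`) this gives
`h₁(s) - h₁(0) ≥ Δ₂ s²/π² ≥ Δ₂ s²/20`.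
-/

open Real

theorem two_div_pi_mul_abs_le_abs_sin {x : ℝ} (hx : |x| ≤ π / 2) : 2 / π * |x| ≤ |sin x| := by
  rw [abs_sin_eq_sin_abs_of_abs_le_pi (by linarith [pi_pos])]
  exact mul_le_sin (abs_nonneg x) hx

theorem sq_div_pi_sq_le_sin_half_sq {u : ℝ} (hu : |u| ≤ π) : u ^ 2 / π ^ 2 ≤ sin (u / 2) ^ 2 := by
  have h := two_div_pi_mul_abs_le_abs_sin (x := u / 2) (by rw [abs_div, abs_two]; linarith)
  calc u ^ 2 / π ^ 2 = (2 / π * |u / 2|) ^ 2 := by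
        rw [mul_pow, sq_abs]; field_simp
    _ ≤ |sin (u / 2)| ^ 2 := pow_le_pow_left₀ (by positivity) h 2
    _ = sin (u / 2) ^ 2 := sq_abs _

theorem pi_sq_lt_twenty : π ^ 2 < 20 := by
  nlinarith [pi_lt_d2, pi_pos]

theorem rpow_one_third_pow_three {N : ℝ} (hN : 0 ≤ N) : (N ^ ((1 : ℝ) / 3)) ^ 3 = N := by
  rw [← rpow_natCast, ← rpow_mul hN]; norm_num

theorem rpow_two_thirds_eq {N : ℝ} (hN : 0 ≤ N) : N ^ ((2 : ℝ) / 3) = (N ^ ((1 : ℝ) / 3)) ^ 2 := by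
  rw [← rpow_natCast, ← rpow_mul hN]; norm_num

theorem rpow_neg_one_third_eq {N : ℝ} (hN : 0 ≤ N) :
    N ^ (-(1 : ℝ) / 3) = (N ^ ((1 : ℝ) / 3))⁻¹ := by
  rw [← rpow_neg_one, ← rpow_mul hN]; norm_num

/-- `Re f(r e^{iu}) - Re f(r)` for `f(ζ) = K log ζ + μ ζ² / 2 - ξ ζ`. -/
noncomputable def circlePhaseIncrement (μ ξ r u : ℝ) : ℝ :=
  μ / 2 * r ^ 2 * (cos (2 * u) - 1) - ξ * r * (cos u - 1)

theorem circlePhaseIncrement_eq (μ ξ r u : ℝ) :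
    circlePhaseIncrement μ ξ r u =
      2 * r * sin (u / 2) ^ 2 * (ξ - 2 * μ * r * cos (u / 2) ^ 2) := by
  obtain ⟨v, rfl⟩ : ∃ v, u = 2 * v := ⟨u / 2, by ring⟩
  rw [circlePhaseIncrement, mul_div_cancel_left₀ v two_ne_zero, cos_two_mul (2 * v),
    cos_two_mul v, sin_sq]
  ring

theorem circlePhaseIncrement_ge {μ ξ r u : ℝ} (hμ : 0 ≤ μ) (hr : 1 / 2 ≤ r)
    (hξ : 0 ≤ ξ - 2 * μ * r) (hu : |u| ≤ π) :
    (ξ - 2 * μ * r) * (u ^ 2 / π ^ 2) ≤ circlePhaseIncrement μ ξ r u := by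
  have hbracket : ξ - 2 * μ * r ≤ ξ - 2 * μ * r * cos (u / 2) ^ 2 := by
    nlinarith [cos_sq_le_one (u / 2), mul_nonneg hμ (by linarith : (0 : ℝ) ≤ r)]
  have hsin : 0 ≤ sin (u / 2) ^ 2 * (ξ - 2 * μ * r * cos (u / 2) ^ 2) :=
    mul_nonneg (sq_nonneg _) (hξ.trans hbracket)
  rw [circlePhaseIncrement_eq]
  calc (ξ - 2 * μ * r) * (u ^ 2 / π ^ 2)
      ≤ sin (u / 2) ^ 2 * (ξ - 2 * μ * r * cos (u / 2) ^ 2) := by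
        rw [mul_comm]; exact mul_le_mul (sq_div_pi_sq_le_sin_half_sq hu) hbracket hξ (sq_nonneg _)
    _ ≤ 2 * r * sin (u / 2) ^ 2 * (ξ - 2 * μ * r * cos (u / 2) ^ 2) := by
        rw [mul_assoc (2 * r)]; exact le_mul_of_one_le_left hsin (by linarith)

theorem steepest_descent_circle_estimate_general (N₁ ν₁ lam₁ d₂ K μ₁ ξ₁ Δ₂ : ℝ) (h₁ : ℝ → ℝ)
    (hN₁ : 1 ≤ N₁)
    (hμ₁ : μ₁ = N₁ - ν₁ * N₁ ^ ((2 : ℝ) / 3))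
    (hξ₁ : ξ₁ = 2 * N₁ + lam₁ * N₁ ^ ((1 : ℝ) / 3))
    (hh₁ : ∀ s : ℝ, h₁ s =
      K * Real.log (1 - d₂ * N₁ ^ (-(1 : ℝ) / 3)) +
        μ₁ / 2 * (1 - d₂ * N₁ ^ (-(1 : ℝ) / 3)) ^ 2 * Real.cos (2 * N₁ ^ (-(1 : ℝ) / 3) * s) -
        ξ₁ * (1 - d₂ * N₁ ^ (-(1 : ℝ) / 3)) * Real.cos (N₁ ^ (-(1 : ℝ) / 3) * s))
    (hΔ₂ : Δ₂ = 2 * (d₂ + ν₁) + (lam₁ - 2 * ν₁ * d₂) * N₁ ^ (-(1 : ℝ) / 3))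
    (hd₂u : d₂ ≤ 1 / 2 * N₁ ^ ((1 : ℝ) / 3))
    (hΔ₂l : 1 ≤ Δ₂) (hν₁ : ν₁ ≤ N₁ ^ ((1 : ℝ) / 3)) :
    ∀ s : ℝ, |s| ≤ π * N₁ ^ ((1 : ℝ) / 3) → h₁ s - h₁ 0 ≥ Δ₂ / 20 * s ^ 2 := by
  intro s hs
  have hN₀ : 0 ≤ N₁ := by linarith
  rw [rpow_neg_one_third_eq hN₀] at hh₁ hΔ₂
  rw [rpow_two_thirds_eq hN₀] at hμ₁
  set n := N₁ ^ ((1 : ℝ) / 3)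
  have hn : 0 < n := by positivity
  have hn₃ : n ^ 3 = N₁ := rpow_one_third_pow_three hN₀
  rw [← hn₃] at hμ₁ hξ₁
  set r := 1 - d₂ * n⁻¹ with hr_def
  have hr : 1 / 2 ≤ r := by
    have : d₂ * n⁻¹ ≤ 1 / 2 := by rw [← div_eq_mul_inv, div_le_iff₀ hn]; linarith
    linarith
  have hμ : 0 ≤ μ₁ := by rw [hμ₁]; nlinarith [mul_nonneg (sq_nonneg n) (sub_nonneg.2 hν₁)]
  have key : ξ₁ - 2 * μ₁ * r = Δ₂ * n ^ 2 := by
    rw [hξ₁, hμ₁, hΔ₂, hr_def]; field_simp; ring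
  have hu : |n⁻¹ * s| ≤ π := by
    rw [abs_mul, abs_inv, abs_of_pos hn, inv_mul_le_iff₀ hn, mul_comm]; exact hs
  have hdiff : h₁ s - h₁ 0 = circlePhaseIncrement μ₁ ξ₁ r (n⁻¹ * s) := by
    rw [hh₁, hh₁, circlePhaseIncrement]; simp only [mul_zero, cos_zero]; ring_nf
  have hΔ₀ : 0 ≤ Δ₂ := by linarith
  calc Δ₂ / 20 * s ^ 2 ≤ Δ₂ * s ^ 2 / π ^ 2 := by
        rw [div_mul_eq_mul_div]; gcongr; exact pi_sq_lt_twenty.le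
    _ = (ξ₁ - 2 * μ₁ * r) * ((n⁻¹ * s) ^ 2 / π ^ 2) := by rw [key]; field_simp
    _ ≤ circlePhaseIncrement μ₁ ξ₁ r (n⁻¹ * s) :=
        circlePhaseIncrement_ge hμ hr (by rw [key]; positivity) hu
    _ = h₁ s - h₁ 0 := hdiff.symm

/-- Steepest-descent estimate (6.7) of Lemma 6.1: under the KPZ scaling
`K = N₁ + ν₁N₁^{2/3} + yN₁^{1/3}`, `μ₁ = N₁ - ν₁N₁^{2/3}`, `ξ₁ = 2N₁ + λ₁N₁^{1/3}`,
with `1 ≤ d₂ ≤ N₁^{1/3}/2`, `Δ₂ ≥ 1` and `ν₁ ≤ N₁^{1/3}`, the function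
`h₁(s) = K log(1-d₂N₁^{-1/3}) + (μ₁/2)(1-d₂N₁^{-1/3})² cos(2N₁^{-1/3}s)
 - ξ₁(1-d₂N₁^{-1/3}) cos(N₁^{-1/3}s)` satisfies `h₁(s) - h₁(0) ≥ (Δ₂/20)s²`
for all `|s| ≤ πN₁^{1/3}`. -/
theorem steepest_descent_circle_estimate (N₁ ν₁ lam₁ y d₂ K μ₁ ξ₁ Δ₂ : ℝ) (h₁ : ℝ → ℝ)
    (hN₁ : 1 ≤ N₁)
    (hK : K = N₁ + ν₁ * N₁ ^ ((2 : ℝ) / 3) + y * N₁ ^ ((1 : ℝ) / 3))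
    (hμ₁ : μ₁ = N₁ - ν₁ * N₁ ^ ((2 : ℝ) / 3))
    (hξ₁ : ξ₁ = 2 * N₁ + lam₁ * N₁ ^ ((1 : ℝ) / 3))
    (hh₁ : ∀ s : ℝ, h₁ s =
      K * Real.log (1 - d₂ * N₁ ^ (-(1 : ℝ) / 3)) +
        μ₁ / 2 * (1 - d₂ * N₁ ^ (-(1 : ℝ) / 3)) ^ 2 * Real.cos (2 * N₁ ^ (-(1 : ℝ) / 3) * s) -
        ξ₁ * (1 - d₂ * N₁ ^ (-(1 : ℝ) / 3)) * Real.cos (N₁ ^ (-(1 : ℝ) / 3) * s))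
    (hΔ₂ : Δ₂ = 2 * (d₂ + ν₁) + (lam₁ - 2 * ν₁ * d₂) * N₁ ^ (-(1 : ℝ) / 3))
    (hd₂l : 1 ≤ d₂) (hd₂u : d₂ ≤ 1 / 2 * N₁ ^ ((1 : ℝ) / 3))
    (hΔ₂l : 1 ≤ Δ₂) (hν₁ : ν₁ ≤ N₁ ^ ((1 : ℝ) / 3)) :
    ∀ s : ℝ, |s| ≤ π * N₁ ^ ((1 : ℝ) / 3) → h₁ s - h₁ 0 ≥ Δ₂ / 20 * s ^ 2 :=
  steepest_descent_circle_estimate_general N₁ ν₁ lam₁ d₂ K μ₁ ξ₁ Δ₂ h₁ hN₁ hμ₁ hξ₁ hh₁ hΔ₂ hd₂u hΔ₂l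
    hν₁
end

section
/- For every real x with 0 ≤ x < 1, log(1−x) ≥ −x − x^2/2 − x^3/(3(1−x)^3). -/
/-!
Expanding `-log (1 - x) = ∑ xⁿ⁺¹/(n+1)`, the terms beyond `x + x²/2` are at most
`x³/3 · xᵏ`, so the remainder is bounded by the geometric sum `x³/(3(1-x))`,
which is at most `x³/(3(1-x)³)` because `0 < 1 - x ≤ 1`.
-/

open Real Finset

theorem neg_log_one_sub_sub_sum_range_le {x : ℝ} (hx0 : 0 ≤ x) (hx1 : x < 1) (n : ℕ) :
    -log (1 - x) - ∑ i ∈ range n, x ^ (i + 1) / (i + 1) ≤ x ^ (n + 1) / ((n + 1) * (1 - x)) := by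
  have hseries := hasSum_pow_div_log_of_abs_lt_one (abs_lt.2 ⟨by linarith, hx1⟩)
  have htail := (hasSum_nat_add_iff' n).2 hseries
  have hgeom : HasSum (fun k : ℕ => x ^ (n + 1) / (n + 1) * x ^ k)
      (x ^ (n + 1) / (n + 1) * (1 - x)⁻¹) :=
    (hasSum_geometric_of_lt_one hx0 hx1).mul_left _
  have hterm (k : ℕ) :
      x ^ (k + n + 1) / ((k + n : ℕ) + 1 : ℝ) ≤ x ^ (n + 1) / (n + 1) * x ^ k := by
    calc x ^ (k + n + 1) / ((k + n : ℕ) + 1 : ℝ) ≤ x ^ (k + n + 1) / (n + 1) := by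
          gcongr
          exact_mod_cast Nat.le_add_left n k
      _ = x ^ (n + 1) / (n + 1) * x ^ k := by ring
  calc -log (1 - x) - ∑ i ∈ range n, x ^ (i + 1) / (i + 1)
      ≤ x ^ (n + 1) / (n + 1) * (1 - x)⁻¹ := hasSum_le hterm htail hgeom
    _ = x ^ (n + 1) / ((n + 1) * (1 - x)) := by field_simp

/-- For every real `0 ≤ x < 1`, `log(1-x) ≥ -x - x^2/2 - x^3/(3(1-x)^3)`. -/
theorem log_one_sub_ge_cubic (x : ℝ) (hx0 : 0 ≤ x) (hx1 : x < 1) :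
    Real.log (1 - x) ≥ -x - x ^ 2 / 2 - x ^ 3 / (3 * (1 - x) ^ 3) := by
  have hremainder := neg_log_one_sub_sub_sum_range_le hx0 hx1 2
  norm_num [sum_range_succ] at hremainder
  have hpos : 0 < 1 - x := by linarith
  have hweaken : x ^ 3 / (3 * (1 - x)) ≤ x ^ 3 / (3 * (1 - x) ^ 3) := by
    gcongr
    exact pow_le_of_le_one hpos.le (by linarith) (by norm_num)
  linarith
end

section
/- Let N_1 > 0, d_1 ≥ 0 and ν_1, λ_1, x ∈ ℝ. Set L = N_1 + ν_1 N_1^{2/3} + x N_1^{1/3}, μ_1 = N_1 − ν_1 N_1^{2/3}, ξ_1 = 2N_1 + λ_1 N_1^{1/3}, and assume L ≥ 0. Then L·log(1 + d_1 N_1^{−1/3}) + (μ_1/2)·(1 + d_1 N_1^{−1/3})^2 − ξ_1·(1 + d_1 N_1^{−1/3}) ≤ −(3/2)N_1 − (1/2)ν_1 N_1^{2/3} − λ_1 N_1^{1/3} + (d_1^3/3)·(1 + ν_1 N_1^{−1/3} + x N_1^{−2/3}) − ν_1 d_1^2 − λ_1 d_1 + x·( d_1 − (1/2) d_1^2 N_1^{−1/3}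 ). -/
/-!
Write `N₁ = t³`, so that all the powers `N₁^{k/3}` become integer powers of `t`. Since `L ≥ 0`,
`log(1 + u)` may be replaced by its third Taylor polynomial `u - u²/2 + u³/3`, an upper bound for
`u ≥ 0` because the difference vanishes at `0` and has derivative `u³/(1 + u) ≥ 0`. After this
replacement both sides are Laurent polynomials in `t`, and they coincide.
-/

open Real Set

lemma Real.log_one_add_le_cubic {u : ℝ} (hu : 0 ≤ u) :
    log (1 + u) ≤ u - u ^ 2 / 2 + u ^ 3 / 3 := by
  let F (y : ℝ) : ℝ := y - y ^ 2 / 2 + y ^ 3 / 3 - log (1 + y)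
  have hF : ∀ y ∈ Ici (0 : ℝ), HasDerivAt F (y ^ 3 / (1 + y)) y := by
    intro y hy
    have hy1 : 1 + y ≠ 0 := by linarith [mem_Ici.mp hy]
    have hpoly := ((hasDerivAt_id y).sub ((hasDerivAt_pow 2 y).div_const 2)).add
      ((hasDerivAt_pow 3 y).div_const 3)
    refine (hpoly.sub (((hasDerivAt_id y).const_add 1).log hy1)).congr_deriv ?_
    simp only [id]
    field_simp
    ring
  have hmono : MonotoneOn F (Ici 0) :=
    monotoneOn_of_hasDerivWithinAt_nonneg (convex_Ici 0)
      (fun y hy ↦ (hF y hy).continuousAt.continuousWithinAt)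
      (fun y hy ↦ (hF y (interior_subset hy)).hasDerivWithinAt)
      (fun y hy ↦ by have : 0 ≤ y := interior_subset hy; positivity)
  have hF0u := hmono self_mem_Ici hu hu
  norm_num [F] at hF0u
  linarith

lemma cubic_taylor_identity {t : ℝ} (ht : t ≠ 0) (d ν lam x : ℝ) :
    (t ^ 3 + ν * t ^ 2 + x * t) * (d * t⁻¹ - (d * t⁻¹) ^ 2 / 2 + (d * t⁻¹) ^ 3 / 3) +
        (t ^ 3 - ν * t ^ 2) / 2 * (1 + d * t⁻¹) ^ 2 - (2 * t ^ 3 + lam * t) * (1 + d * t⁻¹) =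
      -(3 / 2) * t ^ 3 - 1 / 2 * ν * t ^ 2 - lam * t +
        d ^ 3 / 3 * (1 + ν * t⁻¹ + x * (t ^ 2)⁻¹) - ν * d ^ 2 - lam * d +
          x * (d - 1 / 2 * d ^ 2 * t⁻¹) := by
  field_simp
  ring

lemma g_one_zero_le_of_cube_root {t d ν lam x : ℝ} (ht : 0 < t) (hd : 0 ≤ d)
    (hL : 0 ≤ t ^ 3 + ν * t ^ 2 + x * t) :
    (t ^ 3 + ν * t ^ 2 + x * t) * log (1 + d * t⁻¹) +
        (t ^ 3 - ν * t ^ 2) / 2 * (1 + d * t⁻¹) ^ 2 - (2 * t ^ 3 + lam * t) * (1 + d * t⁻¹) ≤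
      -(3 / 2) * t ^ 3 - 1 / 2 * ν * t ^ 2 - lam * t +
        d ^ 3 / 3 * (1 + ν * t⁻¹ + x * (t ^ 2)⁻¹) - ν * d ^ 2 - lam * d +
          x * (d - 1 / 2 * d ^ 2 * t⁻¹) := by
  rw [← cubic_taylor_identity ht.ne' d ν lam x]
  gcongr
  exact log_one_add_le_cubic (by positivity)

/-- The upper bound (6.30) for `g₁(0)`: for `N₁ > 0`, `d₁ ≥ 0` and the KPZ scaling
`L = N₁ + ν₁N₁^{2/3} + xN₁^{1/3} ≥ 0`, `μ₁ = N₁ - ν₁N₁^{2/3}`, `ξ₁ = 2N₁ + λ₁N₁^{1/3}`,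
`L log(1+d₁N₁^{-1/3}) + (μ₁/2)(1+d₁N₁^{-1/3})² - ξ₁(1+d₁N₁^{-1/3})
 ≤ -(3/2)N₁ - (1/2)ν₁N₁^{2/3} - λ₁N₁^{1/3} + (d₁³/3)(1+ν₁N₁^{-1/3}+xN₁^{-2/3})
   - ν₁d₁² - λ₁d₁ + x(d₁ - d₁²N₁^{-1/3}/2)`. -/
theorem g_one_zero_upper_bound (N₁ d₁ ν₁ lam₁ x L μ₁ ξ₁ : ℝ)
    (hN₁ : 0 < N₁) (hd₁ : 0 ≤ d₁)
    (hL : L = N₁ + ν₁ * N₁ ^ ((2 : ℝ) / 3) + x * N₁ ^ ((1 : ℝ) / 3))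
    (hμ₁ : μ₁ = N₁ - ν₁ * N₁ ^ ((2 : ℝ) / 3))
    (hξ₁ : ξ₁ = 2 * N₁ + lam₁ * N₁ ^ ((1 : ℝ) / 3))
    (hLpos : 0 ≤ L) :
    L * Real.log (1 + d₁ * N₁ ^ (-(1 : ℝ) / 3)) +
        μ₁ / 2 * (1 + d₁ * N₁ ^ (-(1 : ℝ) / 3)) ^ 2 -
        ξ₁ * (1 + d₁ * N₁ ^ (-(1 : ℝ) / 3)) ≤
      -(3 / 2) * N₁ - 1 / 2 * ν₁ * N₁ ^ ((2 : ℝ) / 3) - lam₁ * N₁ ^ ((1 : ℝ) / 3) +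
        d₁ ^ 3 / 3 * (1 + ν₁ * N₁ ^ (-(1 : ℝ) / 3) + x * N₁ ^ (-(2 : ℝ) / 3)) -
        ν₁ * d₁ ^ 2 - lam₁ * d₁ + x * (d₁ - 1 / 2 * d₁ ^ 2 * N₁ ^ (-(1 : ℝ) / 3)) := by
  obtain ⟨t, ht, rfl⟩ : ∃ t > 0, N₁ = t ^ 3 :=
    ⟨N₁ ^ ((1 : ℝ) / 3), by positivity, by rw [← rpow_natCast, ← rpow_mul hN₁.le]; norm_num⟩
  have hpow (r : ℝ) : (t ^ 3) ^ (r / 3) = t ^ r := by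
    rw [← rpow_natCast, ← rpow_mul ht.le]; ring_nf
  simp only [neg_div, rpow_neg (pow_nonneg ht.le 3), hpow, rpow_one, rpow_two] at hL hμ₁ hξ₁ ⊢
  subst hL hμ₁ hξ₁
  exact g_one_zero_le_of_cube_root ht hd₁ hLpos
end

section
/- Let N_1 > 0, 0 ≤ d_2 < N_1^{1/3} and ν_1, λ_1, y ∈ ℝ. Set K = N_1 + ν_1 N_1^{2/3} + y N_1^{1/3}, μ_1 = N_1 − ν_1 N_1^{2/3}, ξ_1 = 2N_1 + λ_1 N_1^{1/3}, and assume K ≥ 0. Then K·log(1 − d_2 N_1^{−1/3}) + (μ_1/2)·(1 − d_2 N_1^{−1/3})^2 − ξ_1·(1 − d_2 N_1^{−1/3}) ≥ −(3/2)N_1 − (1/2)ν_1 N_1^{2/3} − λ_1 N_1^{1/3} − (d_2^3/3)·(1 + ν_1 N_1^{−1/3} + y N_1^{−2/3})/(1 − d_2 N_1^{−1/3})^3 − ν_1 d_2^2 + λ_1 d_2 − y·( d_2 + (1/2) d_2^2 N_1^{−1/3} ). -/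
/-!
Put `t = N₁^{1/3}` and `x = d₂/t ∈ [0, 1)`; then every term is a rational function of `t` and `d₂`.
The only inequality is the Taylor bound `log (1 - x) ≥ -x - x²/2 - x³/(3(1-x)³)`, obtained by
dominating the tail `∑_{n ≥ 3} xⁿ/n` of `-log (1 - x)` by the geometric series `(x³/3) ∑ xⁿ`;
after multiplying it by `K ≥ 0`, what remains is an identity in `t` and `d₂`.
-/

open Real Finset

theorem neg_sub_sub_div_le_log_one_sub {x : ℝ} (hx0 : 0 ≤ x) (hx1 : x < 1) :
    -x - x ^ 2 / 2 - x ^ 3 / (3 * (1 - x)) ≤ log (1 - x) := by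
  have hlog := (hasSum_nat_add_iff' 2).mpr
    (hasSum_pow_div_log_of_abs_lt_one (abs_lt.mpr ⟨by linarith, hx1⟩))
  have hgeom := (hasSum_geometric_of_lt_one hx0 hx1).mul_left (x ^ 3 / 3)
  have hterm (n : ℕ) : x ^ (n + 2 + 1) / ((n + 2 : ℕ) + 1 : ℝ) ≤ x ^ 3 / 3 * x ^ n := by
    rw [div_mul_eq_mul_div, ← pow_add, add_comm 3 n]
    gcongr
    push_cast
    linarith [n.cast_nonneg (α := ℝ)]
  have htail := hasSum_le hterm hlog hgeom
  norm_num [sum_range_succ] at htail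
  rw [div_mul_eq_div_div, div_eq_mul_inv _ (1 - x)]
  linarith

theorem neg_sub_sub_div_cube_le_log_one_sub {x : ℝ} (hx0 : 0 ≤ x) (hx1 : x < 1) :
    -x - x ^ 2 / 2 - x ^ 3 / (3 * (1 - x) ^ 3) ≤ log (1 - x) := by
  have h1x : 0 < 1 - x := by linarith
  have hcube : (1 - x) ^ 3 ≤ 1 - x := pow_le_of_le_one h1x.le (by linarith) (by norm_num)
  have : x ^ 3 / (3 * (1 - x)) ≤ x ^ 3 / (3 * (1 - x) ^ 3) := by gcongr
  linarith [neg_sub_sub_div_le_log_one_sub hx0 hx1]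

theorem h_one_zero_lower_bound_in_cube_root (t d ν lam y : ℝ) (ht : 0 < t) (hd0 : 0 ≤ d)
    (hdt : d < t) (hK : 0 ≤ t ^ 3 + ν * t ^ 2 + y * t) :
    (t ^ 3 + ν * t ^ 2 + y * t) * log (1 - d * t⁻¹) + (t ^ 3 - ν * t ^ 2) / 2 * (1 - d * t⁻¹) ^ 2
        - (2 * t ^ 3 + lam * t) * (1 - d * t⁻¹) ≥
      -(3 / 2) * t ^ 3 - 1 / 2 * ν * t ^ 2 - lam * t -
        d ^ 3 / 3 * ((1 + ν * t⁻¹ + y * (t ^ 2)⁻¹) / (1 - d * t⁻¹) ^ 3) -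
        ν * d ^ 2 + lam * d - y * (d + 1 / 2 * d ^ 2 * t⁻¹) := by
  set x := d * t⁻¹ with hx
  have hx0 : 0 ≤ x := by positivity
  have hx1 : x < 1 := by rwa [hx, mul_inv_lt_iff₀ ht, one_mul]
  have htd : t - d ≠ 0 := by linarith
  calc _ = (t ^ 3 + ν * t ^ 2 + y * t) * (-x - x ^ 2 / 2 - x ^ 3 / (3 * (1 - x) ^ 3))
          + (t ^ 3 - ν * t ^ 2) / 2 * (1 - x) ^ 2 - (2 * t ^ 3 + lam * t) * (1 - x) := by
        rw [hx]
        field_simp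
        ring
    _ ≤ _ := by gcongr; exact neg_sub_sub_div_cube_le_log_one_sub hx0 hx1

/-- The lower bound (6.31) for `h₁(0)`: for `N₁ > 0`, `0 ≤ d₂ < N₁^{1/3}` and the KPZ
scaling `K = N₁ + ν₁N₁^{2/3} + yN₁^{1/3} ≥ 0`, `μ₁ = N₁ - ν₁N₁^{2/3}`,
`ξ₁ = 2N₁ + λ₁N₁^{1/3}`,
`K log(1-d₂N₁^{-1/3}) + (μ₁/2)(1-d₂N₁^{-1/3})² - ξ₁(1-d₂N₁^{-1/3})
 ≥ -(3/2)N₁ - (1/2)ν₁N₁^{2/3} - λ₁N₁^{1/3}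
   - (d₂³/3)(1+ν₁N₁^{-1/3}+yN₁^{-2/3})/(1-d₂N₁^{-1/3})³ - ν₁d₂² + λ₁d₂
   - y(d₂ + d₂²N₁^{-1/3}/2)`. -/
theorem h_one_zero_lower_bound (N₁ d₂ ν₁ lam₁ y K μ₁ ξ₁ : ℝ)
    (hN₁ : 0 < N₁) (hd₂0 : 0 ≤ d₂) (hd₂1 : d₂ < N₁ ^ ((1 : ℝ) / 3))
    (hK : K = N₁ + ν₁ * N₁ ^ ((2 : ℝ) / 3) + y * N₁ ^ ((1 : ℝ) / 3))
    (hμ₁ : μ₁ = N₁ - ν₁ * N₁ ^ ((2 : ℝ) / 3))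
    (hξ₁ : ξ₁ = 2 * N₁ + lam₁ * N₁ ^ ((1 : ℝ) / 3))
    (hKpos : 0 ≤ K) :
    K * Real.log (1 - d₂ * N₁ ^ (-(1 : ℝ) / 3)) +
        μ₁ / 2 * (1 - d₂ * N₁ ^ (-(1 : ℝ) / 3)) ^ 2 -
        ξ₁ * (1 - d₂ * N₁ ^ (-(1 : ℝ) / 3)) ≥
      -(3 / 2) * N₁ - 1 / 2 * ν₁ * N₁ ^ ((2 : ℝ) / 3) - lam₁ * N₁ ^ ((1 : ℝ) / 3) -
        d₂ ^ 3 / 3 * ((1 + ν₁ * N₁ ^ (-(1 : ℝ) / 3) + y * N₁ ^ (-(2 : ℝ) / 3)) /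
          (1 - d₂ * N₁ ^ (-(1 : ℝ) / 3)) ^ 3) -
        ν₁ * d₂ ^ 2 + lam₁ * d₂ - y * (d₂ + 1 / 2 * d₂ ^ 2 * N₁ ^ (-(1 : ℝ) / 3)) := by
  set t := N₁ ^ ((1 : ℝ) / 3) with ht_def
  have hcube : N₁ = t ^ 3 := by
    rw [ht_def, ← rpow_natCast, ← rpow_mul hN₁.le]
    norm_num
  have hsq : N₁ ^ ((2 : ℝ) / 3) = t ^ 2 := by
    rw [ht_def, ← rpow_natCast, ← rpow_mul hN₁.le]
    norm_num
  have hinv : N₁ ^ (-(1 : ℝ) / 3) = t⁻¹ := by rw [neg_div, rpow_neg hN₁.le]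
  have hinv_sq : N₁ ^ (-(2 : ℝ) / 3) = (t ^ 2)⁻¹ := by rw [neg_div, rpow_neg hN₁.le, hsq]
  subst hK hμ₁ hξ₁
  rw [hsq, hcube] at hKpos
  rw [hinv, hinv_sq, hsq, hcube]
  exact h_one_zero_lower_bound_in_cube_root t d₂ ν₁ lam₁ y (by positivity) hd₂0 hd₂1 hKpos
end
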